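/- arXiv:math/0412515 — 6 statements merged into one kernel-verified Lean document; each statement's English description precedes it below -/
import Mathlib

section
/- If a sequence (α_n) of complex numbers satisfies ∑_{n=0}^N (n+1)|α_n|² ≤ A log N for all N ≥ 2, then α ∈ ℓ², i.e. ∑_{n=0}^∞ |α_n|² < ∞. -/
/-- If `∑_{n=0}^N (n+1)|α_n|² ≤ A log N` for all `N ≥ 2`, then `α ∈ ℓ²`. -/
theorem stmt1 (α : ℕ → ℂ) (A : ℝ)
    (hA : ∀ N : ℕ, 2 ≤ N →
      ∑ n ∈ Finset.range (N + 1), ((n : ℝ) + 1) * ‖α n‖ ^ 2 ≤ A * Real.log N) :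
    Summable (fun n : ℕ => ‖α n‖ ^ 2) := by
  set b : ℕ → ℝ := fun n => ((n : ℝ) + 1) * ‖α n‖ ^ 2 with hb_def
  have hb : ∀ n, 0 ≤ b n := fun n => by positivity
  set S : ℕ → ℝ := fun n => ∑ i ∈ Finset.range n, b i with hS_def
  have hS0 : ∀ n, 0 ≤ S n := fun n => Finset.sum_nonneg fun i _ => hb i
  have hA0 : 0 ≤ A := by
    have h2 := hA 2 le_rfl
    norm_num at h2
    have hpos : (0:ℝ) ≤ ∑ n ∈ Finset.range 3, ((n : ℝ) + 1) * ‖α n‖ ^ 2 :=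
      Finset.sum_nonneg fun i _ => by positivity
    have hl : (0:ℝ) < Real.log 2 := Real.log_pos (by norm_num)
    nlinarith [h2, hpos, hl]
  have hS : ∀ m : ℕ, S m ≤ A * Real.log ((m : ℝ) + 2) := by
    intro m
    have h1 : S m ≤ S (m + 3) := by
      apply Finset.sum_le_sum_of_subset_of_nonneg
      · exact Finset.range_subset_range.2 (by omega)
      · exact fun i _ _ => hb i
    have h2 : S (m + 3) ≤ A * Real.log ((m + 2 : ℕ) : ℝ) := hA (m + 2) (by omega)
    have : ((m + 2 : ℕ) : ℝ) = (m : ℝ) + 2 := by push_cast; ring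
    rw [this] at h2
    linarith
  -- Abel summation identity
  have key : ∀ n : ℕ, ∑ i ∈ Finset.range n, ‖α i‖ ^ 2
      = S n / ((n : ℝ) + 1) + ∑ i ∈ Finset.range n, S (i + 1) / (((i : ℝ) + 1) * ((i : ℝ) + 2)) := by
    intro n
    induction n with
    | zero => simp [hS_def]
    | succ n ih =>
      rw [Finset.sum_range_succ, Finset.sum_range_succ, ih]
      have hSn : S (n + 1) = S n + b n := by
        simp [hS_def, Finset.sum_range_succ]
      have h1 : ((n : ℝ) + 1) ≠ 0 := by positivity
      have h2 : ((n : ℝ) + 2) ≠ 0 := by positivity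
      have h3 : (((n : ℕ) + 1 : ℕ) : ℝ) = (n : ℝ) + 1 := by push_cast; ring
      rw [hSn, h3, hb_def]
      field_simp
      ring
  -- bound each term
  have hsum3 : Summable (fun n : ℕ => ((n : ℝ)) ^ (-(3/2) : ℝ)) := by
    rw [Real.summable_nat_rpow]
    norm_num
  have hsum : Summable (fun i : ℕ => (((i : ℝ) + 1)) ^ (-(3/2) : ℝ)) := by
    have := (summable_nat_add_iff 1).2 hsum3
    simpa using this
  set C : ℝ := 2 * A + 2 * Real.sqrt 3 * A * (∑' i : ℕ, (((i : ℝ) + 1)) ^ (-(3/2) : ℝ)) with hC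
  apply summable_of_sum_range_le (c := C) (fun n => by positivity)
  intro n
  rw [key n]
  have hlog : ∀ x : ℝ, 0 < x → Real.log x ≤ 2 * Real.sqrt x := by
    intro x hx
    have h1 : Real.log x = 2 * Real.log (Real.sqrt x) := by
      rw [Real.log_sqrt hx.le]; ring
    have h2 : Real.log (Real.sqrt x) ≤ Real.sqrt x - 1 :=
      Real.log_le_sub_one_of_pos (Real.sqrt_pos.2 hx)
    nlinarith [h1, h2]
  -- first term ≤ 2A
  have hterm1 : S n / ((n : ℝ) + 1) ≤ 2 * A := by
    have h1 : S n ≤ A * Real.log ((n : ℝ) + 2) := hS n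
    have h2 : Real.log ((n : ℝ) + 2) ≤ (n : ℝ) + 1 := by
      have := Real.log_le_sub_one_of_pos (x := (n : ℝ) + 2) (by positivity)
      linarith
    have h3 : (0:ℝ) < (n : ℝ) + 1 := by positivity
    rw [div_le_iff₀ h3]
    have h4 : S n ≤ A * ((n : ℝ) + 1) := le_trans h1 (by nlinarith)
    nlinarith [hS0 n]
  -- second: termwise bound
  have hterm2 : ∀ i : ℕ, S (i + 1) / (((i : ℝ) + 1) * ((i : ℝ) + 2))
      ≤ 2 * Real.sqrt 3 * A * (((i : ℝ) + 1)) ^ (-(3/2) : ℝ) := by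
    intro i
    set x : ℝ := (i : ℝ) + 1 with hx
    have hx0 : 0 < x := by positivity
    have hS1 : S (i + 1) ≤ A * Real.log (x + 2) := by
      have := hS (i + 1)
      have hc : (((i : ℕ) + 1 : ℕ) : ℝ) + 2 = x + 2 := by push_cast; ring
      rw [hc] at this
      exact this
    have hlog2 : Real.log (x + 2) ≤ 2 * Real.sqrt (x + 2) := hlog _ (by positivity)
    have hsq : Real.sqrt (x + 2) ≤ Real.sqrt 3 * Real.sqrt x := by
      rw [← Real.sqrt_mul (by norm_num)]
      apply Real.sqrt_le_sqrt
      have : (1:ℝ) ≤ x := by rw [hx]; linarith [Nat.cast_nonneg (α := ℝ) i]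
      nlinarith
    have hnum : S (i + 1) ≤ 2 * Real.sqrt 3 * A * Real.sqrt x := by
      have hs3 : 0 ≤ Real.sqrt 3 * Real.sqrt x := by positivity
      nlinarith [hS1, hlog2, hsq, hA0, hS0 (i+1)]
    have hden : x ^ 2 ≤ x * (x + 1) := by nlinarith
    have hrpow : Real.sqrt x / x ^ 2 = x ^ (-(3/2) : ℝ) := by
      rw [Real.sqrt_eq_rpow, ← Real.rpow_natCast x 2, ← Real.rpow_sub hx0]
      norm_num
    have hx1 : (i : ℝ) + 2 = x + 1 := by rw [hx]; ring
    rw [hx1]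
    calc S (i + 1) / (x * (x + 1)) ≤ (2 * Real.sqrt 3 * A * Real.sqrt x) / (x * (x + 1)) := by
          apply div_le_div_of_nonneg_right hnum ?_ |>.trans_eq rfl
          positivity
      _ ≤ (2 * Real.sqrt 3 * A * Real.sqrt x) / x ^ 2 := by
          apply div_le_div_of_nonneg_left (by positivity) (by positivity) hden
      _ = 2 * Real.sqrt 3 * A * (Real.sqrt x / x ^ 2) := by ring
      _ = 2 * Real.sqrt 3 * A * x ^ (-(3/2) : ℝ) := by rw [hrpow]
  have hsum2 : ∑ i ∈ Finset.range n, S (i + 1) / (((i : ℝ) + 1) * ((i : ℝ) + 2))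
      ≤ 2 * Real.sqrt 3 * A * (∑' i : ℕ, (((i : ℝ) + 1)) ^ (-(3/2) : ℝ)) := by
    calc ∑ i ∈ Finset.range n, S (i + 1) / (((i : ℝ) + 1) * ((i : ℝ) + 2))
        ≤ ∑ i ∈ Finset.range n, 2 * Real.sqrt 3 * A * (((i : ℝ) + 1)) ^ (-(3/2) : ℝ) :=
          Finset.sum_le_sum fun i _ => hterm2 i
      _ = 2 * Real.sqrt 3 * A * ∑ i ∈ Finset.range n, (((i : ℝ) + 1)) ^ (-(3/2) : ℝ) := by
          rw [Finset.mul_sum]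
      _ ≤ 2 * Real.sqrt 3 * A * (∑' i : ℕ, (((i : ℝ) + 1)) ^ (-(3/2) : ℝ)) := by
          apply mul_le_mul_of_nonneg_left ?_ (by positivity)
          exact Summable.sum_le_tsum _ (fun i _ => by positivity) hsum
  rw [hC]
  linarith
end

section
/- Let e_1, …, e_K be unit vectors in a Hilbert space H and set Q = K · sup_{k ≠ l} |⟨e_k, e_l⟩|. If Q < 1, then for every g ∈ H, ∑_{l=1}^K |⟨g, e_l⟩|² ≤ (1 + Q) ‖g‖². -/
open scoped InnerProductSpace

/-- Almost-orthogonality lemma (Killip–Last–Simon): if `e_1, …, e_K` are unit vectors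
in a Hilbert space and `Q = K · sup_{k ≠ l} |⟨e_k, e_l⟩| < 1`, then
`∑_l |⟨g, e_l⟩|² ≤ (1 + Q) ‖g‖²`. -/
theorem stmt2 {H : Type*} [NormedAddCommGroup H] [InnerProductSpace ℂ H]
    [CompleteSpace H] (K : ℕ) (hK : 0 < K) (e : Fin K → H)
    (he : ∀ l, ‖e l‖ = 1)
    (Q : ℝ)
    (hQ : Q = (K : ℝ) *
      ⨆ p : { p : Fin K × Fin K // p.1 ≠ p.2 }, ‖⟪e p.1.1, e p.1.2⟫_ℂ‖)
    (hQ1 : Q < 1) (g : H) :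
    ∑ l : Fin K, ‖⟪g, e l⟫_ℂ‖ ^ 2 ≤ (1 + Q) * ‖g‖ ^ 2 := by
  set M : ℝ := ⨆ p : { p : Fin K × Fin K // p.1 ≠ p.2 }, ‖⟪e p.1.1, e p.1.2⟫_ℂ‖ with hM
  have hM0 : 0 ≤ M := Real.iSup_nonneg fun p => norm_nonneg _
  have hQ0 : 0 ≤ Q := by rw [hQ]; positivity
  have hMle : ∀ k l : Fin K, k ≠ l → ‖⟪e k, e l⟫_ℂ‖ ≤ M := by
    intro k l hkl
    exact le_ciSup (f := fun p : { p : Fin K × Fin K // p.1 ≠ p.2 } =>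
        ‖⟪e p.1.1, e p.1.2⟫_ℂ‖)
      (Set.Finite.bddAbove (Set.finite_range _)) ⟨(k, l), hkl⟩
  set c : Fin K → ℂ := fun l => ⟪e l, g⟫_ℂ with hc
  have hcg : ∀ l, ‖⟪g, e l⟫_ℂ‖ = ‖c l‖ := fun l => norm_inner_symm g (e l)
  set S : ℝ := ∑ l : Fin K, ‖c l‖ ^ 2 with hS
  have hgoal : ∑ l : Fin K, ‖⟪g, e l⟫_ℂ‖ ^ 2 = S := by
    rw [hS]; exact Finset.sum_congr rfl fun l _ => by rw [hcg]
  rw [hgoal]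
  have hS0 : 0 ≤ S := Finset.sum_nonneg fun l _ => sq_nonneg _
  set v : H := ∑ l : Fin K, c l • e l with hv
  -- S = ‖⟪g, v⟫‖
  have h1 : ⟪g, v⟫_ℂ = (S : ℂ) := by
    rw [hv, inner_sum, hS]
    push_cast
    refine Finset.sum_congr rfl fun l _ => ?_
    rw [inner_smul_right, hc]
    show ⟪e l, g⟫_ℂ * ⟪g, e l⟫_ℂ = ((‖⟪e l, g⟫_ℂ‖ : ℂ)) ^ 2
    rw [← inner_conj_symm g (e l)]
    exact Complex.mul_conj' _
  have hSle : S ≤ ‖g‖ * ‖v‖ := by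
    calc S = ‖⟪g, v⟫_ℂ‖ := by rw [h1]; simp [abs_of_nonneg hS0]
    _ ≤ ‖g‖ * ‖v‖ := norm_inner_le_norm g v
  -- ‖v‖² ≤ (1 + Q) * S
  have hv2 : ‖v‖ ^ 2 ≤ (1 + Q) * S := by
    have hvv : ‖v‖ ^ 2 = RCLike.re (⟪v, v⟫_ℂ) := InnerProductSpace.norm_sq_eq_re_inner v
    have hexp : ⟪v, v⟫_ℂ = ∑ k : Fin K, ∑ l : Fin K,
        (starRingEnd ℂ) (c k) * (c l * ⟪e k, e l⟫_ℂ) := by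
      rw [hv, sum_inner]
      refine Finset.sum_congr rfl fun k _ => ?_
      rw [inner_smul_left, inner_sum, Finset.mul_sum]
      exact Finset.sum_congr rfl fun l _ => by rw [inner_smul_right]
    rw [hvv, hexp, map_sum]
    have hbd : ∀ k : Fin K, RCLike.re (∑ l : Fin K,
        (starRingEnd ℂ) (c k) * (c l * ⟪e k, e l⟫_ℂ)) ≤
        ∑ l : Fin K, ((if k = l then ‖c k‖ ^ 2 else 0) + M * (‖c k‖ * ‖c l‖)) := by
      intro k
      rw [map_sum]
      refine Finset.sum_le_sum fun l _ => ?_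
      by_cases hkl : k = l
      · subst hkl
        rw [if_pos rfl]
        have h11 : ⟪e k, e k⟫_ℂ = (1 : ℂ) := by
          rw [inner_self_eq_norm_sq_to_K, he k]; norm_num
        calc RCLike.re ((starRingEnd ℂ) (c k) * (c k * ⟪e k, e k⟫_ℂ))
            ≤ ‖(starRingEnd ℂ) (c k) * (c k * ⟪e k, e k⟫_ℂ)‖ := RCLike.re_le_norm _
          _ = ‖c k‖ * (‖c k‖ * ‖⟪e k, e k⟫_ℂ‖) := by
              rw [norm_mul, norm_mul, RCLike.norm_conj]
          _ = ‖c k‖ ^ 2 := by rw [h11]; simp [sq]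
          _ ≤ ‖c k‖ ^ 2 + M * (‖c k‖ * ‖c k‖) := by nlinarith [norm_nonneg (c k), hM0]
      · simp only [if_neg hkl, zero_add]
        calc RCLike.re ((starRingEnd ℂ) (c k) * (c l * ⟪e k, e l⟫_ℂ))
            ≤ ‖(starRingEnd ℂ) (c k) * (c l * ⟪e k, e l⟫_ℂ)‖ := RCLike.re_le_norm _
          _ = ‖c k‖ * (‖c l‖ * ‖⟪e k, e l⟫_ℂ‖) := by
              rw [norm_mul, norm_mul, RCLike.norm_conj]
          _ ≤ ‖c k‖ * (‖c l‖ * M) :=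
              mul_le_mul_of_nonneg_left
                (mul_le_mul_of_nonneg_left (hMle k l hkl) (norm_nonneg _))
                (norm_nonneg _)
          _ = M * (‖c k‖ * ‖c l‖) := by ring
    calc (∑ k : Fin K, RCLike.re (∑ l : Fin K,
            (starRingEnd ℂ) (c k) * (c l * ⟪e k, e l⟫_ℂ)))
        ≤ ∑ k : Fin K, ∑ l : Fin K,
            ((if k = l then ‖c k‖ ^ 2 else 0) + M * (‖c k‖ * ‖c l‖)) :=
          Finset.sum_le_sum fun k _ => hbd k
      _ = S + M * ((∑ l : Fin K, ‖c l‖) * (∑ l : Fin K, ‖c l‖)) := by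
          simp only [Finset.sum_add_distrib, Finset.sum_ite_eq, Finset.mem_univ, if_pos]
          rw [hS, Finset.sum_mul_sum, Finset.mul_sum]
          congr 1
          exact Finset.sum_congr rfl fun k _ => by rw [Finset.mul_sum]
      _ ≤ S + M * ((K : ℝ) * S) := by
          have hcs : (∑ l : Fin K, ‖c l‖) * (∑ l : Fin K, ‖c l‖) ≤ (K : ℝ) * S := by
            have h := sq_sum_le_card_mul_sum_sq (s := (Finset.univ : Finset (Fin K)))
              (f := fun l => ‖c l‖)
            simpa [sq, hS] using h
          nlinarith
      _ = (1 + Q) * S := by rw [hQ]; ring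
  -- combine
  by_cases hS0' : S = 0
  · rw [hS0']; positivity
  · have hSpos : 0 < S := lt_of_le_of_ne hS0 (Ne.symm hS0')
    have h2 : S ^ 2 ≤ ‖g‖ ^ 2 * ((1 + Q) * S) := by
      calc S ^ 2 ≤ (‖g‖ * ‖v‖) ^ 2 := by nlinarith [norm_nonneg g, norm_nonneg v]
        _ = ‖g‖ ^ 2 * ‖v‖ ^ 2 := by ring
        _ ≤ ‖g‖ ^ 2 * ((1 + Q) * S) := by nlinarith [sq_nonneg ‖g‖]
    nlinarith
end

section
/- For ξ ∈ (0, π) and any j ≥ 1, the tail of the series ∑_{k≥j} k^{-1} e^{ikξ} converges and satisfies |∑_{k=j}^∞ k^{-1} e^{ikξ}| ≤ C log(1 + π ξ^{-1} / j) for a universal constant C > 0. -/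
open Filter Real

-- Lower bound on |e^{iξ} - 1|
lemma aux_exp_sub_one_lb {ξ : ℝ} (h0 : 0 < ξ) (hπ : ξ < π) :
    2 * ξ / π ≤ ‖Complex.exp (Complex.I * ξ) - 1‖ := by
  have hcos : Real.cos ξ ≤ 1 - 2 / π ^ 2 * ξ ^ 2 :=
    Real.cos_le_one_sub_mul_cos_sq (by rw [abs_of_pos h0]; exact hπ.le)
  have hsq : ‖Complex.exp (Complex.I * ξ) - 1‖ ^ 2 = 2 - 2 * Real.cos ξ := by
    rw [mul_comm Complex.I (ξ:ℂ), Complex.sq_norm, Complex.normSq_apply]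
    simp only [Complex.sub_re, Complex.sub_im, Complex.exp_ofReal_mul_I_re,
      Complex.exp_ofReal_mul_I_im, Complex.one_re, Complex.one_im]
    nlinarith [Real.sin_sq_add_cos_sq ξ]
  have hπ0 : 0 < π := Real.pi_pos
  have h1 : (2 * ξ / π) ^ 2 ≤ ‖Complex.exp (Complex.I * ξ) - 1‖ ^ 2 := by
    rw [hsq, div_pow]
    rw [div_le_iff₀ (by positivity)]
    have hcos' := mul_le_mul_of_nonneg_right hcos (sq_nonneg π)
    have h2 : 2 / π ^ 2 * ξ ^ 2 * π ^ 2 = 2 * ξ ^ 2 := by field_simp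
    nlinarith
  nlinarith [norm_nonneg (Complex.exp (Complex.I * ξ) - 1),
    div_nonneg (by positivity : (0:ℝ) ≤ 2 * ξ) hπ0.le]

lemma aux_geom_bound {ξ : ℝ} (h0 : 0 < ξ) (hπ : ξ < π) (m k : ℕ) :
    ‖∑ i ∈ Finset.range k, Complex.exp (Complex.I * ((m + i : ℕ) : ℂ) * ξ)‖ ≤
      π * ξ⁻¹ := by
  have hπ0 : 0 < π := Real.pi_pos
  set z : ℂ := Complex.exp (Complex.I * ξ) with hz
  have hzn : ∀ n : ℕ, Complex.exp (Complex.I * (n : ℂ) * ξ) = z ^ n := by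
    intro n
    rw [show Complex.I * (n : ℂ) * ξ = (n : ℂ) * (Complex.I * ξ) by ring, Complex.exp_nat_mul]
  have habs_z : ‖z‖ = 1 := by
    rw [hz, Complex.norm_exp]
    simp
  have hlb : 2 * ξ / π ≤ ‖z - 1‖ := aux_exp_sub_one_lb h0 hπ
  have hz1 : z ≠ 1 := by
    intro h
    rw [h, sub_self, norm_zero] at hlb
    have : 0 < 2 * ξ / π := by positivity
    linarith
  have hsum : ∑ i ∈ Finset.range k, Complex.exp (Complex.I * ((m + i : ℕ) : ℂ) * ξ)
      = z ^ m * ((z ^ k - 1) / (z - 1)) := by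
    rw [← geom_sum_eq hz1, Finset.mul_sum]
    refine Finset.sum_congr rfl fun i _ => ?_
    rw [hzn, pow_add]
  rw [hsum, norm_mul, norm_pow, habs_z, one_pow, one_mul, norm_div]
  have h2 : ‖z ^ k - 1‖ ≤ 2 := by
    calc ‖z ^ k - 1‖ ≤ ‖z ^ k‖ + ‖(1:ℂ)‖ :=
          norm_sub_le _ _
    _ = 2 := by rw [norm_pow, habs_z, one_pow, norm_one]; norm_num
  calc ‖z ^ k - 1‖ / ‖z - 1‖ ≤ 2 / (2 * ξ / π) := by
        gcongr
    _ = π * ξ⁻¹ := by field_simp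

lemma aux_tail_bound {ξ : ℝ} (h0 : 0 < ξ) (hπ : ξ < π) {m : ℕ} (hm : 1 ≤ m) (N : ℕ) :
    ‖∑ k ∈ Finset.Icc m N, (k : ℂ)⁻¹ * Complex.exp (Complex.I * k * ξ)‖ ≤
      π * ξ⁻¹ / m := by
  have hπ0 : 0 < π := Real.pi_pos
  set M : ℝ := π * ξ⁻¹ with hM
  have hM0 : 0 < M := by positivity
  rcases lt_or_ge N m with h | h
  · rw [Finset.Icc_eq_empty (by omega)]
    simp only [Finset.sum_empty, norm_zero]
    positivity
  have hIcc : Finset.Icc m N = Finset.Ico m (N + 1) := by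
    rw [Finset.Ico_add_one_right_eq_Icc]
  rw [hIcc, Finset.sum_Ico_eq_sum_range]
  set n : ℕ := N + 1 - m with hn
  have hn1 : 1 ≤ n := by omega
  set f : ℕ → ℝ := fun i => ((m + i : ℕ) : ℝ)⁻¹ with hf
  set g : ℕ → ℂ := fun i => Complex.exp (Complex.I * ((m + i : ℕ) : ℂ) * ξ) with hg
  have hterm : ∀ i, ((m + i : ℕ) : ℂ)⁻¹ * Complex.exp (Complex.I * ((m + i : ℕ) : ℂ) * ξ)
      = f i • g i := by
    intro i
    rw [hf, hg]
    simp only [Complex.real_smul, Complex.ofReal_inv, Complex.ofReal_natCast]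
  have hfnonneg : ∀ i, 0 ≤ f i := fun i => by positivity
  have hfanti : ∀ i, f (i + 1) ≤ f i := by
    intro i
    apply inv_anti₀
    · positivity
    · push_cast; linarith
  have hG : ∀ t : ℕ, ‖∑ i ∈ Finset.range t, g i‖ ≤ M :=
    fun t => aux_geom_bound h0 hπ m t
  calc ‖∑ i ∈ Finset.range n, ((m + i : ℕ) : ℂ)⁻¹ *
          Complex.exp (Complex.I * ((m + i : ℕ) : ℂ) * ξ)‖
      = ‖∑ i ∈ Finset.range n, f i • g i‖ := by
        congr 1; exact Finset.sum_congr rfl fun i _ => hterm i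
    _ = ‖f (n - 1) • (∑ i ∈ Finset.range n, g i) -
          ∑ i ∈ Finset.range (n - 1), (f (i + 1) - f i) • (∑ j ∈ Finset.range (i + 1), g j)‖ := by
        rw [Finset.sum_range_by_parts]
    _ ≤ ‖f (n - 1) • (∑ i ∈ Finset.range n, g i)‖ +
          ‖∑ i ∈ Finset.range (n - 1), (f (i + 1) - f i) •
            (∑ j ∈ Finset.range (i + 1), g j)‖ := norm_sub_le _ _
    _ ≤ f (n - 1) * M + ∑ i ∈ Finset.range (n - 1), (f i - f (i + 1)) * M := by
        gcongr
        · calc ‖f (n - 1) • (∑ i ∈ Finset.range n, g i)‖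
              = |f (n - 1)| * ‖∑ i ∈ Finset.range n, g i‖ := by
                rw [norm_smul, Real.norm_eq_abs]
          _ ≤ f (n - 1) * M := by
                rw [abs_of_nonneg (hfnonneg _)]
                exact mul_le_mul_of_nonneg_left (hG n) (hfnonneg _)
        · calc ‖∑ i ∈ Finset.range (n - 1), (f (i + 1) - f i) •
                (∑ j ∈ Finset.range (i + 1), g j)‖
              ≤ ∑ i ∈ Finset.range (n - 1), ‖(f (i + 1) - f i) •
                (∑ j ∈ Finset.range (i + 1), g j)‖ := by
                exact norm_sum_le _ _
          _ ≤ ∑ i ∈ Finset.range (n - 1), (f i - f (i + 1)) * M := by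
                refine Finset.sum_le_sum fun i _ => ?_
                rw [norm_smul, Real.norm_eq_abs,
                  abs_of_nonpos (by linarith [hfanti i]), neg_sub]
                exact mul_le_mul_of_nonneg_left (hG _) (by linarith [hfanti i])
    _ = f (n - 1) * M + (f 0 - f (n - 1)) * M := by
        rw [← Finset.sum_mul, Finset.sum_range_sub' f (n - 1)]
    _ = f 0 * M := by ring
    _ = M / m := by
        simp [hf, inv_mul_eq_div]

lemma aux_log_lb {x : ℝ} (hx : 0 ≤ x) : x / (1 + x) ≤ Real.log (1 + x) := by
  have hx1 : (0:ℝ) < 1 + x := by linarith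
  rw [Real.le_log_iff_exp_le hx1]
  have h := Real.add_one_le_exp (-(x / (1 + x)))
  rw [Real.exp_neg] at h
  have h4 : -(x / (1 + x)) + 1 = (1 + x)⁻¹ := by field_simp; ring
  rw [h4] at h
  have hE := Real.exp_pos (x / (1 + x))
  rw [inv_le_inv₀ hx1 hE] at h
  exact h

/-- For `ξ ∈ (0, π)` and `j ≥ 1`, the tail `∑_{k=j}^∞ k⁻¹ e^{ikξ}` converges and
its modulus is at most `C log(1 + π ξ⁻¹ / j)` for a universal constant `C`. -/
theorem stmt4 :
    ∃ C : ℝ, 0 < C ∧ ∀ ξ : ℝ, 0 < ξ → ξ < π → ∀ j : ℕ, 1 ≤ j →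
      ∃ S : ℂ,
        Tendsto (fun N : ℕ =>
            ∑ k ∈ Finset.Icc j N, (k : ℂ)⁻¹ * Complex.exp (Complex.I * k * ξ))
          atTop (nhds S) ∧
        ‖S‖ ≤ C * Real.log (1 + π * ξ⁻¹ / j) := by
  refine ⟨10, by norm_num, ?_⟩
  intro ξ hξ0 hξπ j hj
  have hπ0 : 0 < π := Real.pi_pos
  set M : ℝ := π * ξ⁻¹ with hM
  have hM0 : 0 < M := by positivity
  have hM1 : 1 ≤ M := by
    rw [hM, ← div_eq_mul_inv, le_div_iff₀ hξ0, one_mul]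
    exact hξπ.le
  set F : ℕ → ℂ := fun k => (k : ℂ)⁻¹ * Complex.exp (Complex.I * k * ξ) with hF
  set P : ℕ → ℂ := fun N => ∑ k ∈ Finset.Icc j N, F k with hP
  have htail : ∀ m N : ℕ, 1 ≤ m →
      ‖∑ k ∈ Finset.Icc m N, F k‖ ≤ M / m :=
    fun m N hm => aux_tail_bound hξ0 hξπ hm N
  have hIccIoc : ∀ t : ℕ, Finset.Icc j t = Finset.Ioc (j - 1) t := by
    intro t
    rw [← Finset.Icc_add_one_left_eq_Ioc]
    congr 1
    omega
  have hsplitP : ∀ m n : ℕ, j ≤ m → m ≤ n →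
      P n = P m + ∑ k ∈ Finset.Icc (m + 1) n, F k := by
    intro m n hjm hmn
    rw [hP]
    simp only [hIccIoc, Finset.Icc_add_one_left_eq_Ioc]
    rw [← Finset.sum_Ioc_consecutive _ (by omega : j - 1 ≤ m) hmn]
  have habsF : ∀ k : ℕ, ‖F k‖ = (k : ℝ)⁻¹ := by
    intro k
    rw [hF]
    simp only [norm_mul, norm_inv, Complex.norm_natCast, Complex.norm_exp]
    have : (Complex.I * (k : ℂ) * (ξ : ℂ)).re = 0 := by simp
    rw [this, Real.exp_zero, mul_one]
  -- Cauchy sequence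
  have hcauchy : CauchySeq P := by
    apply cauchySeq_of_le_tendsto_0 (fun N => M / (max N j : ℕ))
    · intro n m N hn hm
      have key : ∀ a b : ℕ, N ≤ a → N ≤ b → a ≤ b →
          dist (P b) (P a) ≤ M / ((max N j : ℕ) : ℝ) := by
        intro a b hNa hNb hab
        have hmaxpos : (0:ℝ) < ((max N j : ℕ) : ℝ) := by
          have : 1 ≤ max N j := le_trans hj (le_max_right N j)
          exact_mod_cast this
        rcases lt_or_ge a j with haj | hja
        · have hPa : P a = 0 := by
            rw [hP]
            simp only
            rw [Finset.Icc_eq_empty (by omega)]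
            simp
          rw [dist_eq_norm, hPa, sub_zero]
          calc ‖P b‖ = ‖P b‖ := rfl
            _ ≤ M / j := htail j b hj
            _ ≤ M / ((max N j : ℕ) : ℝ) := by
                apply div_le_div_of_nonneg_left hM0.le hmaxpos
                exact_mod_cast (by omega : max N j ≤ j)
        · rw [dist_eq_norm, hsplitP a b hja hab]
          simp only [add_sub_cancel_left]
          calc ‖∑ k ∈ Finset.Icc (a + 1) b, F k‖
              = ‖∑ k ∈ Finset.Icc (a + 1) b, F k‖ := rfl
            _ ≤ M / ((a + 1 : ℕ) : ℝ) := htail (a + 1) b (by omega)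
            _ ≤ M / ((max N j : ℕ) : ℝ) := by
                apply div_le_div_of_nonneg_left hM0.le hmaxpos
                exact_mod_cast (by omega : max N j ≤ a + 1)
      rcases le_total n m with hnm | hmn
      · rw [dist_comm]
        exact key n m hn hm hnm
      · exact key m n hm hn hmn
    · apply Tendsto.div_atTop tendsto_const_nhds
      apply tendsto_natCast_atTop_atTop.comp
      exact tendsto_atTop_mono (fun N => le_max_left N j) tendsto_id
  obtain ⟨S, hS⟩ := cauchySeq_tendsto_of_complete hcauchy
  refine ⟨S, hS, ?_⟩
  have hSnorm : Tendsto (fun N => ‖P N‖) atTop (nhds ‖S‖) := hS.norm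
  set x : ℝ := M / j with hx
  have hj0 : (0:ℝ) < j := by exact_mod_cast hj
  have hx0 : 0 < x := by positivity
  have hlogpos : 0 < Real.log (1 + x) := Real.log_pos (by linarith)
  have hgoal : ‖S‖ = ‖S‖ := rfl
  rw [hgoal]
  rcases le_or_gt x 1 with hx1 | hx1
  · -- small tail case
    have hSb : ‖S‖ ≤ x := by
      apply le_of_tendsto hSnorm
      filter_upwards with N
      exact htail j N hj
    have hlb : x / 2 ≤ Real.log (1 + x) := by
      calc x / 2 ≤ x / (1 + x) := by
            apply div_le_div_of_nonneg_left hx0.le (by linarith) (by linarith)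
        _ ≤ Real.log (1 + x) := aux_log_lb hx0.le
    linarith
  · -- harmonic sum case
    set N₀ : ℕ := ⌈M⌉₊ with hN₀
    have hMN₀ : M ≤ (N₀ : ℝ) := Nat.le_ceil M
    have hN₀M : (N₀ : ℝ) ≤ M + 1 := (Nat.ceil_lt_add_one hM0.le).le
    have hjM : (j : ℝ) < M := by
      rw [hx, lt_div_iff₀ hj0, one_mul] at hx1
      linarith
    have hjN₀ : j ≤ N₀ := by
      have : (j : ℝ) ≤ (N₀ : ℝ) := by linarith
      exact_mod_cast this
    have hN₀pos : 0 < N₀ := by omega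
    set H : ℝ := ∑ k ∈ Finset.Icc j N₀, (k : ℝ)⁻¹ with hH
    -- ‖P N‖ ≤ H + 1 eventually
    have hev : ∀ N, N₀ ≤ N → ‖P N‖ ≤ H + 1 := by
      intro N hN
      rw [hsplitP N₀ N hjN₀ hN]
      calc ‖P N₀ + ∑ k ∈ Finset.Icc (N₀ + 1) N, F k‖
          ≤ ‖P N₀‖ + ‖∑ k ∈ Finset.Icc (N₀ + 1) N, F k‖ := norm_add_le _ _
        _ ≤ H + 1 := by
            gcongr
            · calc ‖P N₀‖ ≤ ∑ k ∈ Finset.Icc j N₀, ‖F k‖ := norm_sum_le _ _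
                _ = H := Finset.sum_congr rfl fun k _ => habsF k
            · calc ‖∑ k ∈ Finset.Icc (N₀ + 1) N, F k‖
                  ≤ M / (N₀ + 1 : ℕ) := htail (N₀ + 1) N (by omega)
                _ ≤ 1 := by
                    rw [div_le_one (by positivity)]
                    push_cast
                    linarith
    have hSb : ‖S‖ ≤ H + 1 := by
      apply le_of_tendsto hSnorm
      filter_upwards [eventually_ge_atTop N₀] with N hN
      exact hev N hN
    -- bound H
    have hharm : ∀ t : ℕ, ((harmonic t : ℚ) : ℝ) = ∑ k ∈ Finset.Icc 1 t, (k : ℝ)⁻¹ := by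
      intro t
      rw [harmonic_eq_sum_Icc]
      push_cast
      rfl
    have hsplitH : ∑ k ∈ Finset.Icc 1 N₀, (k : ℝ)⁻¹
        = ∑ k ∈ Finset.Icc 1 (j - 1), (k : ℝ)⁻¹ + H := by
      rw [hH, hIccIoc]
      have h1 : ∀ t : ℕ, Finset.Icc 1 t = Finset.Ioc 0 t := fun t => by
        rw [← Finset.Icc_add_one_left_eq_Ioc]; rfl
      rw [h1, h1]
      rw [← Finset.sum_Ioc_consecutive _ (by omega : 0 ≤ j - 1) (by omega : j - 1 ≤ N₀)]
    have hHb : H ≤ 1 + Real.log N₀ - Real.log j := by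
      have h1 : ((harmonic N₀ : ℚ) : ℝ) ≤ 1 + Real.log N₀ := harmonic_le_one_add_log N₀
      have h2 : Real.log j ≤ ((harmonic (j - 1) : ℚ) : ℝ) := by
        have := log_add_one_le_harmonic (j - 1)
        have hcast : ((j - 1 : ℕ) : ℝ) + 1 = (j : ℝ) := by
          have : (j - 1) + 1 = j := by omega
          exact_mod_cast this
        rw [← hcast]
        convert this using 2
        push_cast
        ring
      rw [hharm, hsplitH] at h1
      rw [hharm] at h2
      linarith
    have hlogN₀ : Real.log N₀ ≤ Real.log 2 + Real.log M := by
      rw [← Real.log_mul (by norm_num) (ne_of_gt hM0)]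
      apply Real.log_le_log (by exact_mod_cast hN₀pos)
      linarith
    have hlogx : Real.log M - Real.log j = Real.log x := by
      rw [hx, Real.log_div (ne_of_gt hM0) (ne_of_gt hj0)]
    have hlogx1 : Real.log x ≤ Real.log (1 + x) := by
      apply Real.log_le_log hx0
      linarith
    have hlog2 : Real.log 2 ≤ Real.log (1 + x) := by
      apply Real.log_le_log (by norm_num)
      linarith
    have hlog2' : (0.6931471803 : ℝ) < Real.log 2 := Real.log_two_gt_d9
    linarith
end

section
/- Suppose (α_n) satisfies ∑_{n=0}^N (n+1)|α_n|² ≤ A log N for all N ≥ 2, and g : ℕ → ℝ satisfies |g(j) − g(j−1)| ≤ B |α_{j−2}| for all j ≥ 2 and some B > 0. Then there exist constants C₁, C₂ > 0 (depending only on A and B) such that for every ξ ∈ (0,1), sup_{n ≥ 1} |∑_{j=1}^n j^{-1} e^{i[jξ + g(j)]}| ≤ C₁ log(ξ^{-1}) + C₂. -/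
open Filter

section AuxStmt5

open Finset Complex

lemma aux_harmonic (l : ℕ) : ∑ m ∈ range l, (1:ℝ)/((m:ℝ)+1) ≤ 1 + Real.log l := by
  induction l with
  | zero => simp
  | succ n ih =>
    rw [Finset.sum_range_succ]
    rcases Nat.eq_zero_or_pos n with h | h
    · subst h; simp
    · have hlog : 1/((n:ℝ)+1) ≤ Real.log (n+1) - Real.log n := by
        rw [← Real.log_div (by positivity) (by positivity)]
        have h1 : Real.log (((n:ℝ))/((n:ℝ)+1)) ≤ (n:ℝ)/((n:ℝ)+1) - 1 :=
          Real.log_le_sub_one_of_pos (by positivity)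
        have h2 : Real.log (((n:ℝ)+1)/(n:ℝ)) = - Real.log (((n:ℝ))/((n:ℝ)+1)) := by
          rw [← Real.log_inv]; congr 1; field_simp
        have h3 : (n:ℝ)/((n:ℝ)+1) - 1 = -(1/((n:ℝ)+1)) := by field_simp; ring
        push_cast
        nlinarith [h1, h2.ge, h2.le]
      have := ih
      push_cast at hlog ⊢
      linarith

lemma aux_mono (J N : ℕ) (hJ : 1 ≤ J) (hJN : J ≤ N) :
    (1 + Real.log N)/(N:ℝ) ≤ (1 + Real.log J)/(J:ℝ) := by
  have hJ' : (1:ℝ) ≤ (J:ℝ) := by exact_mod_cast hJ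
  have hN' : (J:ℝ) ≤ (N:ℝ) := by exact_mod_cast hJN
  have hJ0 : (0:ℝ) < J := by linarith
  have hN0 : (0:ℝ) < N := by linarith
  rw [div_le_div_iff₀ hN0 hJ0]
  have hlog : Real.log N - Real.log J ≤ (N:ℝ)/(J:ℝ) - 1 := by
    rw [← Real.log_div (by positivity) (by positivity)]
    exact Real.log_le_sub_one_of_pos (by positivity)
  have hlogJ : 0 ≤ Real.log J := Real.log_nonneg hJ'
  have : (J:ℝ) * ((N:ℝ)/(J:ℝ)) = (N:ℝ) := by field_simp
  nlinarith [hlog, hlogJ, hN']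

lemma aux_step (l : ℕ) (hl : 2 ≤ l) :
    (1 + Real.log l)/(l:ℝ)^2 ≤ (3 + Real.log (l-1:ℕ))/((l-1:ℕ):ℝ) - (3 + Real.log l)/(l:ℝ) := by
  have hc : ((l-1:ℕ):ℝ) = (l:ℝ) - 1 := by
    have : 1 ≤ l := by omega
    push_cast [this]; ring
  rw [hc]
  have hl' : (2:ℝ) ≤ (l:ℝ) := by exact_mod_cast hl
  have h1 : (0:ℝ) < (l:ℝ) - 1 := by linarith
  have h0 : (0:ℝ) < (l:ℝ) := by linarith
  have hkey : Real.log (l:ℝ) - Real.log ((l:ℝ)-1) ≤ 1/((l:ℝ)-1) := by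
    rw [← Real.log_div (by positivity) (by positivity)]
    have := Real.log_le_sub_one_of_pos (x := (l:ℝ)/((l:ℝ)-1)) (by positivity)
    have he : (l:ℝ)/((l:ℝ)-1) - 1 = 1/((l:ℝ)-1) := by field_simp; ring
    linarith
  have h2 : (l:ℝ)*(Real.log l - Real.log ((l:ℝ)-1)) ≤ 2 := by
    have hle : (l:ℝ)/((l:ℝ)-1) ≤ 2 := by rw [div_le_iff₀ h1]; linarith
    have := mul_le_mul_of_nonneg_left hkey (le_of_lt h0)
    have : (l:ℝ) * (1/((l:ℝ)-1)) = (l:ℝ)/((l:ℝ)-1) := by ring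
    nlinarith [mul_le_mul_of_nonneg_left hkey (le_of_lt h0), hle]
  set N : ℝ := 3 + (l:ℝ)*Real.log ((l:ℝ)-1) - ((l:ℝ)-1)*Real.log l with hNdef
  have hlogl : 0 ≤ Real.log (l:ℝ) := Real.log_nonneg (by linarith)
  have hN : 1 + Real.log l ≤ N := by
    have : (l:ℝ)*Real.log ((l:ℝ)-1) - (l:ℝ)*Real.log l ≥ -2 := by nlinarith [h2]
    simp only [hNdef]; nlinarith [this]
  have hR : (3 + Real.log ((l:ℝ)-1))/((l:ℝ)-1) - (3 + Real.log l)/(l:ℝ)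
      = N/(((l:ℝ)-1)*(l:ℝ)) := by
    field_simp [hNdef]; ring
  rw [hR, div_le_div_iff₀ (by positivity) (by positivity)]
  have hNpos : 0 ≤ N := by nlinarith [hN, hlogl]
  have step1 : (1 + Real.log l) * (((l:ℝ)-1)*(l:ℝ)) ≤ N * (((l:ℝ)-1)*(l:ℝ)) :=
    mul_le_mul_of_nonneg_right hN (by positivity)
  have step2 : N * (((l:ℝ)-1)*(l:ℝ)) ≤ N * (l:ℝ)^2 := by nlinarith [hNpos]
  linarith

lemma aux_telescope (F : ℕ → ℝ) (a : ℕ) :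
    ∀ b, a ≤ b → ∑ l ∈ Finset.Ioc a b, (F (l-1) - F l) = F a - F b := by
  intro b hb
  induction b, hb using Nat.le_induction with
  | base => simp
  | succ n hn ih =>
    rw [Finset.sum_Ioc_succ_top (by omega : a ≤ n), ih]
    simp

lemma aux_abel (u c : ℕ → ℂ) (J : ℕ) :
    ∀ n, J ≤ n → ∑ j ∈ Finset.Ioc J n, u j * c j
      = (∑ j ∈ Finset.Ioc J n, u j) * c n
        + ∑ k ∈ Finset.Ico (J+1) n, (∑ j ∈ Finset.Ioc J k, u j) * (c k - c (k+1)) := by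
  intro n hn
  induction n, hn using Nat.le_induction with
  | base => simp
  | succ n hn ih =>
    rw [Finset.sum_Ioc_succ_top (by omega : J ≤ n), ih,
        Finset.sum_Ioc_succ_top (by omega : J ≤ n)]
    rcases Nat.eq_or_lt_of_le hn with h | h
    · subst h; simp [Finset.Ico_self]
    · rw [Finset.sum_Ico_succ_top (by omega : J+1 ≤ n)]
      ring

lemma aux_inv_telescope (k : ℕ) (hk : 1 ≤ k) :
    ∀ N, k ≤ N → (1:ℝ)/(k:ℝ) = 1/(N:ℝ) + ∑ l ∈ Finset.Ico k N, (1/(l:ℝ) - 1/((l:ℝ)+1)) := by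
  intro N hN
  induction N, hN using Nat.le_induction with
  | base => simp
  | succ n hn ih =>
    rw [Finset.sum_Ico_succ_top (by omega : k ≤ n)]
    push_cast at ih ⊢
    linarith

lemma aux_swap (β : ℕ → ℝ) (J N : ℕ) (hJN : J ≤ N) (hN : 1 ≤ N) :
    ∑ k ∈ Finset.Ioc J N, β k * (1/(k:ℝ))
      = (∑ k ∈ Finset.Ioc J N, β k) * (1/(N:ℝ))
        + ∑ l ∈ Finset.Ioo J N, (1/(l:ℝ) - 1/((l:ℝ)+1)) * (∑ k ∈ Finset.Ioc J l, β k) := by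
  have step : ∀ k ∈ Finset.Ioc J N, β k * (1/(k:ℝ))
      = β k * (1/(N:ℝ)) + ∑ l ∈ Finset.Ioo J N,
          (if k ≤ l then β k * (1/(l:ℝ) - 1/((l:ℝ)+1)) else 0) := by
    intro k hk
    rw [Finset.mem_Ioc] at hk
    have h1 : (1:ℝ)/(k:ℝ) = 1/(N:ℝ) + ∑ l ∈ Finset.Ico k N, (1/(l:ℝ) - 1/((l:ℝ)+1)) :=
      aux_inv_telescope k (by omega) N hk.2
    have h2 : ∑ l ∈ Finset.Ioo J N, (if k ≤ l then β k * (1/(l:ℝ) - 1/((l:ℝ)+1)) else 0)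
        = ∑ l ∈ Finset.Ico k N, β k * (1/(l:ℝ) - 1/((l:ℝ)+1)) := by
      rw [← Finset.sum_filter]
      congr 1
      ext l
      simp only [Finset.mem_filter, Finset.mem_Ioo, Finset.mem_Ico]
      omega
    rw [h2, ← Finset.mul_sum, h1]; ring
  rw [Finset.sum_congr rfl step, Finset.sum_add_distrib, ← Finset.sum_mul]
  congr 1
  rw [Finset.sum_comm]
  refine Finset.sum_congr rfl ?_
  intro l hl
  rw [Finset.mem_Ioo] at hl
  rw [← Finset.sum_filter]
  have : Finset.filter (fun k => k ≤ l) (Finset.Ioc J N) = Finset.Ioc J l := by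
    ext k
    simp only [Finset.mem_filter, Finset.mem_Ioc]
    omega
  rw [this, ← Finset.sum_mul]
  ring

lemma aux_exp_I_sub_one (t : ℝ) : ‖Complex.exp (Complex.I * t) - 1‖ ≤ |t| := by
  have he : Complex.exp (Complex.I * t) = Real.cos t + Real.sin t * Complex.I := by
    rw [mul_comm, Complex.exp_mul_I]
    rw [← Complex.ofReal_cos, ← Complex.ofReal_sin]
  have hsq : ‖Complex.exp (Complex.I * t) - 1‖ ^ 2 = 2 - 2 * Real.cos t := by
    rw [he, ← Complex.normSq_eq_norm_sq]
    have : (↑(Real.cos t) + ↑(Real.sin t) * Complex.I - 1 : ℂ)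
        = Complex.mk (Real.cos t - 1) (Real.sin t) := by
      apply Complex.ext <;> simp [-Complex.ofReal_cos, -Complex.ofReal_sin]
    rw [this, Complex.normSq_mk]
    nlinarith [Real.sin_sq_add_cos_sq t]
  have hcos : 2 - 2 * Real.cos t ≤ t ^ 2 := by
    have h1 : |Real.sin (t/2)| ≤ |t/2| := Real.abs_sin_le_abs
    have h2 : Real.cos t = 1 - 2 * Real.sin (t/2) ^ 2 := by
      have h4 : Real.cos (2*(t/2)) = 2 * Real.cos (t/2)^2 - 1 := Real.cos_two_mul (t/2)
      rw [(by ring : 2*(t/2) = t)] at h4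
      have h3 := Real.sin_sq_add_cos_sq (t/2)
      nlinarith
    nlinarith [_root_.sq_abs (Real.sin (t/2)), _root_.sq_abs (t/2), sq_nonneg (Real.sin (t/2)), h1, abs_nonneg (t/2), abs_nonneg (Real.sin (t/2)), mul_self_le_mul_self (abs_nonneg (Real.sin (t/2))) h1]
  have h0 : 0 ≤ ‖Complex.exp (Complex.I * t) - 1‖ := norm_nonneg _
  nlinarith [hsq, hcos, _root_.sq_abs t, abs_nonneg t]

lemma aux_contraction (x y : ℝ) :
    ‖Complex.exp (Complex.I * x) - Complex.exp (Complex.I * y)‖ ≤ |x - y| := by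
  have : Complex.exp (Complex.I * x) - Complex.exp (Complex.I * y)
      = Complex.exp (Complex.I * y) * (Complex.exp (Complex.I * (x - y)) - 1) := by
    rw [mul_sub, ← Complex.exp_add]; push_cast; ring_nf
  rw [this, norm_mul]
  have h1 : ‖Complex.exp (Complex.I * y)‖ = 1 := by
    rw [Complex.norm_exp]; simp
  rw [h1, one_mul]
  have := aux_exp_I_sub_one (x - y)
  rwa [Complex.ofReal_sub] at this

lemma aux_geom {ξ : ℝ} (h0 : 0 < ξ) (h1 : ξ < 1) (J k : ℕ) :
    ‖∑ j ∈ Finset.Ioc J k, Complex.exp (Complex.I * ((j:ℝ)*ξ))‖ ≤ (8/3) * ξ⁻¹ := by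
  have hsin : (3/4) * ξ ≤ Real.sin ξ := by
    have := Real.sin_gt_sub_cube h0
    nlinarith [pow_le_pow_left₀ h0.le h1.le 3, sq_nonneg ξ]
  set z : ℂ := Complex.exp (Complex.I * ξ) with hz
  have hterm : ∀ j : ℕ, Complex.exp (Complex.I * ((j:ℝ)*ξ)) = z ^ j := by
    intro j
    rw [hz, ← Complex.exp_nat_mul]
    congr 1
    push_cast
    ring
  have habs_z : ‖z‖ = 1 := by rw [hz, Complex.norm_exp]; simp
  have him : (z - 1).im = Real.sin ξ := by
    rw [hz, mul_comm, Complex.exp_mul_I]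
    simp [← Complex.ofReal_cos, ← Complex.ofReal_sin]
  have hz1 : ‖z - 1‖ ≥ (3/4) * ξ := by
    calc (3/4) * ξ ≤ Real.sin ξ := hsin
    _ ≤ |(z-1).im| := by rw [him]; exact le_abs_self _
    _ ≤ ‖z - 1‖ := Complex.abs_im_le_norm _
  have hzne : z ≠ 1 := by
    intro h
    rw [h] at hz1
    simp at hz1
    nlinarith
  rcases le_or_gt k J with h | h
  · rw [Finset.Ioc_eq_empty (by omega)]
    simp
    positivity
  · have hIoc : Finset.Ioc J k = Finset.Ico (J+1) (k+1) := by
      ext x; simp only [Finset.mem_Ioc, Finset.mem_Ico]; omega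
    rw [Finset.sum_congr rfl (fun j _ => hterm j), hIoc,
      geom_sum_Ico hzne (by omega)]
    rw [norm_div]
    have hnum : ‖z ^ (k+1) - z ^ (J+1)‖ ≤ 2 := by
      calc ‖z ^ (k+1) - z ^ (J+1)‖
          ≤ ‖z ^ (k+1)‖ + ‖z ^ (J+1)‖ := by
            exact (norm_sub_le _ _)
      _ = 2 := by rw [norm_pow, norm_pow, habs_z]; norm_num
    have hden : (0:ℝ) < ‖z - 1‖ := by
      have : (0:ℝ) < (3/4) * ξ := by positivity
      linarith
    calc ‖z ^ (k+1) - z ^ (J+1)‖ / ‖z - 1‖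
        ≤ 2 / ((3/4) * ξ) := by
          exact div_le_div₀ (by norm_num) hnum (by positivity) hz1
      _ = (8/3) * ξ⁻¹ := by field_simp; ring

lemma aux_CS (α : ℕ → ℂ) (A : ℝ) (hA0 : 0 ≤ A)
    (hA : ∀ N : ℕ, 2 ≤ N →
      ∑ n ∈ Finset.range (N + 1), ((n : ℝ) + 1) * ‖α n‖ ^ 2 ≤ A * Real.log N)
    (l : ℕ) (hl : 3 ≤ l) :
    ∑ m ∈ range l, ‖α m‖ ≤ Real.sqrt A * (1 + Real.log l) := by
  have hlog : (0:ℝ) ≤ Real.log l := Real.log_nonneg (by exact_mod_cast Nat.one_le_of_lt hl)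
  have hS : ∑ m ∈ range l, ((m:ℝ)+1) * ‖α m‖ ^ 2 ≤ A * Real.log l := by
    have h1 := hA (l-1) (by omega)
    have h2 : (l-1) + 1 = l := by omega
    rw [h2] at h1
    refine h1.trans (mul_le_mul_of_nonneg_left ?_ hA0)
    apply Real.log_le_log (by exact_mod_cast Nat.sub_pos_of_lt (by omega))
    exact_mod_cast Nat.sub_le l 1
  have hCS := Finset.sum_mul_sq_le_sq_mul_sq (range l)
      (fun m => Real.sqrt (1/((m:ℝ)+1))) (fun m => Real.sqrt ((m:ℝ)+1) * ‖α m‖)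
  have hfg : ∀ m ∈ range l, Real.sqrt (1/((m:ℝ)+1)) * (Real.sqrt ((m:ℝ)+1) * ‖α m‖)
      = ‖α m‖ := by
    intro m _
    rw [← mul_assoc, ← Real.sqrt_mul (by positivity)]
    have : (1/((m:ℝ)+1)) * ((m:ℝ)+1) = 1 := by field_simp
    rw [this, Real.sqrt_one, one_mul]
  have hf2 : ∀ m ∈ range l, Real.sqrt (1/((m:ℝ)+1)) ^ 2 = 1/((m:ℝ)+1) := by
    intro m _; exact Real.sq_sqrt (by positivity)
  have hg2 : ∀ m ∈ range l, (Real.sqrt ((m:ℝ)+1) * ‖α m‖) ^ 2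
      = ((m:ℝ)+1) * ‖α m‖ ^ 2 := by
    intro m _
    rw [mul_pow, Real.sq_sqrt (by positivity)]
  rw [Finset.sum_congr rfl hfg, Finset.sum_congr rfl hf2, Finset.sum_congr rfl hg2] at hCS
  have hH : ∑ m ∈ range l, 1/((m:ℝ)+1) ≤ 1 + Real.log l := aux_harmonic l
  have hHpos : (0:ℝ) ≤ ∑ m ∈ range l, 1/((m:ℝ)+1) := by positivity
  have hSpos : (0:ℝ) ≤ ∑ m ∈ range l, ((m:ℝ)+1) * ‖α m‖ ^ 2 := by positivity
  have hsq : (∑ m ∈ range l, ‖α m‖)^2 ≤ A * (1 + Real.log l)^2 := by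
    calc (∑ m ∈ range l, ‖α m‖)^2
        ≤ (∑ m ∈ range l, 1/((m:ℝ)+1)) * (∑ m ∈ range l, ((m:ℝ)+1) * ‖α m‖ ^ 2) :=
          hCS
      _ ≤ (1 + Real.log l) * (A * Real.log l) := by
          apply mul_le_mul hH hS hSpos (by linarith)
      _ ≤ A * (1 + Real.log l)^2 := by nlinarith [hlog, hA0]
  have hpos : (0:ℝ) ≤ ∑ m ∈ range l, ‖α m‖ := by positivity
  calc ∑ m ∈ range l, ‖α m‖
      = Real.sqrt ((∑ m ∈ range l, ‖α m‖)^2) := (Real.sqrt_sq hpos).symm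
    _ ≤ Real.sqrt (A * (1 + Real.log l)^2) := Real.sqrt_le_sqrt hsq
    _ = Real.sqrt A * (1 + Real.log l) := by
        rw [Real.sqrt_mul hA0, Real.sqrt_sq (by linarith)]

lemma aux_reindex (f : ℕ → ℝ) (m : ℕ) :
    ∑ j ∈ Finset.Icc 1 m, f j = ∑ i ∈ Finset.range m, f (i+1) := by
  apply Finset.sum_nbij' (fun j => j - 1) (fun i => i + 1) <;>
    intros <;> simp_all [Finset.mem_Icc, Finset.mem_range] <;> omega

lemma aux_reindex2 (f : ℕ → ℝ) (J l : ℕ) :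
    ∑ k ∈ Finset.Ioc J l, f (k-1) = ∑ m ∈ Finset.Ico J l, f m := by
  apply Finset.sum_nbij' (fun k => k - 1) (fun m => m + 1) <;>
    intros <;> simp_all [Finset.mem_Ioc, Finset.mem_Ico] <;> omega


end AuxStmt5

set_option maxHeartbeats 1000000

/-- Coulomb-decay exponential sum bound: under the Coulomb condition on `α` and a
Lipschitz-type bound on the phase `g`, `|∑_{j=1}^n j⁻¹ e^{i(jξ + g(j))}|` is bounded by
`C₁ log ξ⁻¹ + C₂`, uniformly in `n ≥ 1` and `ξ ∈ (0,1)`. -/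
theorem stmt5 (α : ℕ → ℂ) (A B : ℝ) (hB : 0 < B)
    (hA : ∀ N : ℕ, 2 ≤ N →
      ∑ n ∈ Finset.range (N + 1), ((n : ℝ) + 1) * ‖α n‖ ^ 2 ≤ A * Real.log N) :
    ∃ C₁ C₂ : ℝ, 0 < C₁ ∧ 0 < C₂ ∧
      ∀ g : ℕ → ℝ, (∀ j : ℕ, 2 ≤ j → |g j - g (j - 1)| ≤ B * ‖α (j - 2)‖) →
        ∀ ξ : ℝ, 0 < ξ → ξ < 1 → ∀ n : ℕ, 1 ≤ n →
          ‖∑ j ∈ Finset.Icc 1 n,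
              (j : ℂ)⁻¹ * Complex.exp (Complex.I * ((j : ℝ) * ξ + g j))‖
            ≤ C₁ * Real.log ξ⁻¹ + C₂ := by
  have hA0 : 0 ≤ A := by
    have h2 := hA 2 le_rfl
    have hpos : (0:ℝ) ≤ ∑ n ∈ Finset.range (2+1), ((n:ℝ)+1) * ‖α n‖^2 := by
      positivity
    have hlog2 : (0:ℝ) < Real.log ((2:ℕ):ℝ) := by
      rw [(by norm_num : ((2:ℕ):ℝ) = 2)]; exact Real.log_pos (by norm_num)
    nlinarith [h2, hpos, hlog2]
  have hsA : 0 ≤ Real.sqrt A := Real.sqrt_nonneg A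
  refine ⟨1 + 6*B*Real.sqrt A, 30*(1 + B*Real.sqrt A), by nlinarith, by nlinarith, ?_⟩
  intro g hg ξ hξ0 hξ1 n hn
  set β : ℕ → ℝ := fun m => ‖α m‖ with hβdef
  have hβ : ∀ m, 0 ≤ β m := fun m => norm_nonneg _
  have hξi : (1:ℝ) < ξ⁻¹ := (one_lt_inv₀ hξ0).mpr hξ1
  set L := Real.log ξ⁻¹ with hLdef
  have hL : 0 ≤ L := Real.log_nonneg hξi.le
  set J := ⌈ξ⁻¹⌉₊ with hJdef
  have hJ1 : ξ⁻¹ ≤ (J:ℝ) := Nat.le_ceil _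
  have hJ2 : 2 ≤ J := by
    have h1 : (1:ℝ) < (J:ℝ) := lt_of_lt_of_le hξi hJ1
    exact_mod_cast Nat.succ_le_of_lt (by exact_mod_cast h1)
  have hJpos : (0:ℝ) < (J:ℝ) := by positivity
  have hJu : (J:ℝ) ≤ 2*ξ⁻¹ := by
    have h := Nat.ceil_lt_add_one (le_of_lt (by positivity : (0:ℝ) < ξ⁻¹))
    linarith
  have hlogJ : Real.log J ≤ 2 + L := by
    have h1 : Real.log (J:ℝ) ≤ Real.log (2*ξ⁻¹) := Real.log_le_log hJpos hJu
    rw [Real.log_mul (by norm_num) (by positivity)] at h1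
    have h2 : Real.log 2 ≤ 1 := by
      have := Real.log_le_sub_one_of_pos (by norm_num : (0:ℝ) < 2); linarith
    rw [hLdef]; linarith
  have hJξ : 1/(J:ℝ) ≤ ξ := by
    rw [div_le_iff₀ hJpos]
    calc (1:ℝ) = ξ * ξ⁻¹ := by field_simp
    _ ≤ ξ * J := by nlinarith
  -- absolute value of each term
  have hterm_abs : ∀ j:ℕ, ‖(j:ℂ)⁻¹ * Complex.exp (Complex.I * ((j:ℝ)*ξ + g j))‖
      = 1/(j:ℝ) := by
    intro j
    rw [norm_mul, norm_inv, Complex.norm_natCast, Complex.norm_exp]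
    have : (Complex.I * ((j:ℝ)*ξ + g j)).re = 0 := by simp
    rw [this, Real.exp_zero, mul_one, one_div]
  -- Part 1 bound
  have part1 : ∀ m:ℕ, 1 ≤ m → ‖∑ j ∈ Finset.Icc 1 m,
      (j:ℂ)⁻¹ * Complex.exp (Complex.I * ((j:ℝ)*ξ + g j))‖ ≤ 1 + Real.log m := by
    intro m hm
    calc ‖∑ j ∈ Finset.Icc 1 m, (j:ℂ)⁻¹ * Complex.exp (Complex.I * ((j:ℝ)*ξ + g j))‖
        ≤ ∑ j ∈ Finset.Icc 1 m, ‖(j:ℂ)⁻¹ * Complex.exp (Complex.I * ((j:ℝ)*ξ + g j))‖ :=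
          norm_sum_le _ _
      _ = ∑ j ∈ Finset.Icc 1 m, 1/(j:ℝ) := Finset.sum_congr rfl (fun j _ => hterm_abs j)
      _ = ∑ i ∈ Finset.range m, 1/((i:ℝ)+1) := by
          rw [aux_reindex (fun j => 1/(j:ℝ)) m]; push_cast; rfl
      _ ≤ 1 + Real.log m := aux_harmonic m
  rcases le_or_gt n J with hnJ | hnJ
  · -- small n case
    have h1 := part1 n hn
    have h2 : Real.log n ≤ Real.log J :=
      Real.log_le_log (by exact_mod_cast hn) (by exact_mod_cast hnJ)
    have : ‖∑ j ∈ Finset.Icc 1 n,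
        (j:ℂ)⁻¹ * Complex.exp (Complex.I * ((j:ℝ)*ξ + g j))‖ ≤ 3 + L := by linarith
    refine this.trans ?_
    nlinarith [hL, mul_nonneg (mul_nonneg hB.le hsA) hL, mul_nonneg hB.le hsA]
  · -- main case n > J
    have hsplit : Finset.Icc 1 n = Finset.Icc 1 J ∪ Finset.Ioc J n := by
      ext x
      simp only [Finset.mem_Icc, Finset.mem_Ioc, Finset.mem_union]
      omega
    have hdisj : Disjoint (Finset.Icc 1 J) (Finset.Ioc J n) := by
      rw [Finset.disjoint_left]
      intro x hx hx'
      simp only [Finset.mem_Icc, Finset.mem_Ioc] at hx hx'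
      omega
    rw [hsplit, Finset.sum_union hdisj]
    refine (norm_add_le _ _).trans ?_
    have hS1 : ‖∑ j ∈ Finset.Icc 1 J,
        (j:ℂ)⁻¹ * Complex.exp (Complex.I * ((j:ℝ)*ξ + g j))‖ ≤ 3 + L := by
      have := part1 J (by omega)
      linarith
    -- now part 2
    set b : ℕ → ℂ := fun j => Complex.exp (Complex.I * (g j : ℝ)) with hbdef
    set w : ℕ → ℂ := fun j => Complex.exp (Complex.I * ((j:ℝ)*ξ)) with hwdef
    set c : ℕ → ℂ := fun j => b j / (j:ℂ) with hcdef
    have hterm_eq : ∀ j ∈ Finset.Ioc J n,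
        (j:ℂ)⁻¹ * Complex.exp (Complex.I * ((j:ℝ)*ξ + g j)) = w j * c j := by
      intro j _
      rw [hwdef, hcdef, hbdef]
      simp only []
      rw [div_eq_mul_inv, ← mul_assoc, ← Complex.exp_add]
      rw [mul_comm ((j:ℂ)⁻¹)]
      congr 2
      push_cast
      ring
    rw [Finset.sum_congr rfl hterm_eq, aux_abel w c J n (le_of_lt hnJ)]
    have habs_b : ∀ j, ‖b j‖ = 1 := by
      intro j; rw [hbdef]; simp [Complex.norm_exp]
    have hD : ∀ k, ‖∑ j ∈ Finset.Ioc J k, w j‖ ≤ (8/3) * ξ⁻¹ :=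
      fun k => aux_geom hξ0 hξ1 J k
    have hcn : ‖c n‖ = 1/(n:ℝ) := by
      rw [hcdef]
      simp only []
      rw [norm_div, habs_b, Complex.norm_natCast]
    have hck : ∀ k ∈ Finset.Ico (J+1) n, ‖c k - c (k+1)‖
        ≤ B * β (k-1) * (1/((k:ℝ)+1)) + (1/(k:ℝ) - 1/((k:ℝ)+1)) := by
      intro k hk
      rw [Finset.mem_Ico] at hk
      have hk1 : 1 ≤ k := by omega
      have hkR : (1:ℝ) ≤ (k:ℝ) := by exact_mod_cast hk1
      have hsplit2 : c k - c (k+1)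
          = (b k - b (k+1)) * (((k:ℝ)+1 : ℂ))⁻¹ + b k * ((k:ℂ)⁻¹ - (((k:ℝ)+1 : ℂ))⁻¹) := by
        rw [hcdef]
        simp only []
        have hkne : ((k:ℝ):ℂ) ≠ 0 := by
          simp only [ne_eq, Complex.ofReal_natCast]
          exact_mod_cast Nat.cast_ne_zero.mpr (by omega)
        push_cast
        field_simp
        ring
      rw [hsplit2]
      refine (norm_add_le _ _).trans ?_
      rw [norm_mul, norm_mul, habs_b, one_mul, norm_inv]
      have e1 : ‖b k - b (k+1)‖ ≤ B * β (k-1) := by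
        rw [hbdef]
        simp only []
        refine (aux_contraction (g k) (g (k+1))).trans ?_
        rw [abs_sub_comm]
        have := hg (k+1) (by omega)
        have e2 : (k+1) - 1 = k := by omega
        have e3 : (k+1) - 2 = k-1 := by omega
        rw [e2, e3] at this
        exact this
      have e4 : ‖((k:ℝ)+1 : ℂ)‖ = (k:ℝ)+1 := by
        rw [← Complex.ofReal_one, ← Complex.ofReal_add, Complex.norm_real, Real.norm_eq_abs]
        exact abs_of_pos (by linarith)
      have e5 : ‖(k:ℂ)⁻¹ - (((k:ℝ)+1 : ℂ))⁻¹‖ = 1/(k:ℝ) - 1/((k:ℝ)+1) := by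
        have : ((k:ℂ)⁻¹ - (((k:ℝ)+1 : ℂ))⁻¹) = ((1/(k:ℝ) - 1/((k:ℝ)+1) : ℝ) : ℂ) := by
          push_cast
          rw [one_div, one_div]
        rw [this, Complex.norm_real, Real.norm_eq_abs]
        apply _root_.abs_of_nonneg
        have h1 : (1:ℝ)/((k:ℝ)+1) ≤ 1/(k:ℝ) := by
          apply one_div_le_one_div_of_le (by linarith) (by linarith)
        linarith
      rw [e4, e5]
      have e7 := mul_le_mul_of_nonneg_right e1 (by positivity : (0:ℝ) ≤ ((k:ℝ)+1)⁻¹)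
      have e8 : (1:ℝ)/((k:ℝ)+1) = ((k:ℝ)+1)⁻¹ := one_div _
      rw [e8]
      linarith
    -- bound on the boundary term
    have hnR : ξ⁻¹ ≤ (n:ℝ) := hJ1.trans (by exact_mod_cast Nat.cast_le.mpr hnJ.le)
    have hnpos : (0:ℝ) < (n:ℝ) := by
      have : (0:ℕ) < n := by omega
      exact_mod_cast this
    have hT1 : ‖(∑ j ∈ Finset.Ioc J n, w j) * c n‖ ≤ 8/3 := by
      rw [norm_mul, hcn]
      calc ‖∑ j ∈ Finset.Ioc J n, w j‖ * (1/(n:ℝ))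
          ≤ ((8/3) * ξ⁻¹) * (1/(n:ℝ)) := mul_le_mul_of_nonneg_right (hD n) (by positivity)
        _ ≤ 8/3 := by
            rw [mul_assoc, mul_one_div]
            have h9 : ξ⁻¹ / (n:ℝ) ≤ 1 := (div_le_one hnpos).mpr hnR
            nlinarith [h9]
    -- sums
    set Sb : ℝ := ∑ k ∈ Finset.Ico (J+1) n, β (k-1) * (1/((k:ℝ)+1)) with hSbdef
    set St : ℝ := ∑ k ∈ Finset.Ico (J+1) n, (1/(k:ℝ) - 1/((k:ℝ)+1)) with hStdef
    have hSb0 : 0 ≤ Sb := by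
      rw [hSbdef]
      apply Finset.sum_nonneg
      intro k hk
      have : (0:ℝ) ≤ 1/((k:ℝ)+1) := by positivity
      exact mul_nonneg (hβ _) this
    have hT2 : ‖∑ k ∈ Finset.Ico (J+1) n,
        (∑ j ∈ Finset.Ioc J k, w j) * (c k - c (k+1))‖
        ≤ (8/3) * ξ⁻¹ * (B * Sb + St) := by
      refine (norm_sum_le _ _).trans ?_
      have hterm : ∀ k ∈ Finset.Ico (J+1) n,
          ‖(∑ j ∈ Finset.Ioc J k, w j) * (c k - c (k+1))‖
          ≤ (8/3) * ξ⁻¹ * (B * β (k-1) * (1/((k:ℝ)+1)) + (1/(k:ℝ) - 1/((k:ℝ)+1))) := by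
        intro k hk
        rw [norm_mul]
        have hk' := hk
        rw [Finset.mem_Ico] at hk'
        have hnn : (0:ℝ) ≤ B * β (k-1) * (1/((k:ℝ)+1)) + (1/(k:ℝ) - 1/((k:ℝ)+1)) := by
          have h1 : (0:ℝ) ≤ B * β (k-1) * (1/((k:ℝ)+1)) := by
            apply mul_nonneg (mul_nonneg hB.le (hβ _)); positivity
          have hkpos : (0:ℝ) < (k:ℝ) := by
            have : (0:ℕ) < k := by omega
            exact_mod_cast this
          have h2 : (1:ℝ)/((k:ℝ)+1) ≤ 1/(k:ℝ) :=
            one_div_le_one_div_of_le hkpos (by linarith)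
          linarith
        exact mul_le_mul (hD k) (hck k hk) (norm_nonneg _) (by positivity)
      refine (Finset.sum_le_sum hterm).trans_eq ?_
      rw [← Finset.mul_sum]
      congr 1
      rw [hSbdef, hStdef, Finset.mul_sum, ← Finset.sum_add_distrib]
      apply Finset.sum_congr rfl
      intros; ring
    -- telescoping sum bound
    have hSt : St ≤ ξ := by
      have h := aux_inv_telescope (J+1) (by omega) n (by omega)
      have hIcast : ((J+1:ℕ):ℝ) = (J:ℝ) + 1 := by push_cast; ring
      rw [hIcast] at h
      have h1 : St = 1/((J:ℝ)+1) - 1/(n:ℝ) := by rw [hStdef]; linarith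
      have h2 : (1:ℝ)/((J:ℝ)+1) ≤ 1/(J:ℝ) := one_div_le_one_div_of_le hJpos (by linarith)
      have h3 : (0:ℝ) ≤ 1/(n:ℝ) := by positivity
      linarith [hJξ]
    -- the weighted β sum bound
    have hlogJ0 : (0:ℝ) ≤ Real.log J := Real.log_nonneg (by exact_mod_cast Nat.one_le_of_lt hJ2)
    have hSb2 : Sb ≤ 2 * Real.sqrt A * (3 + Real.log J) * (1/(J:ℝ)) := by
      have hIco : Finset.Ico (J+1) n = Finset.Ioc J (n-1) := by
        ext x
        simp only [Finset.mem_Ico, Finset.mem_Ioc]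
        omega
      set N := n - 1 with hNdef
      have hJN : J ≤ N := by omega
      have step1 : Sb ≤ ∑ k ∈ Finset.Ioc J N, β (k-1) * (1/(k:ℝ)) := by
        rw [hSbdef, hIco]
        apply Finset.sum_le_sum
        intro k hk
        rw [Finset.mem_Ioc] at hk
        have hkpos : (0:ℝ) < (k:ℝ) := by
          have : (0:ℕ) < k := by omega
          exact_mod_cast this
        exact mul_le_mul_of_nonneg_left
          (one_div_le_one_div_of_le hkpos (by linarith)) (hβ _)
      refine step1.trans ?_
      rcases eq_or_lt_of_le hJN with hEq | hLt
      · rw [← hEq, Finset.Ioc_self, Finset.sum_empty]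
        apply mul_nonneg (mul_nonneg (by positivity) (by linarith)) (by positivity)
      · -- J < N
        have hQ : ∀ l:ℕ, J < l → ∑ k ∈ Finset.Ioc J l, β (k-1)
            ≤ Real.sqrt A * (1 + Real.log l) := by
          intro l hl
          rw [aux_reindex2 β J l]
          have hsub : Finset.Ico J l ⊆ Finset.range l := by
            intro x hx
            rw [Finset.mem_range]
            rw [Finset.mem_Ico] at hx
            omega
          have hstep := Finset.sum_le_sum_of_subset_of_nonneg hsub
            (fun m _ _ => hβ m)
          refine hstep.trans ?_
          simp only [hβdef]
          exact aux_CS α A hA0 hA l (by omega)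
        rw [aux_swap (fun k => β (k-1)) J N hJN (by omega)]
        have hq1 : (∑ k ∈ Finset.Ioc J N, β (k-1)) * (1/(N:ℝ))
            ≤ Real.sqrt A * (3 + Real.log J) * (1/(J:ℝ)) := by
          have hNpos : (0:ℝ) < (N:ℝ) := by
            have : (0:ℕ) < N := by omega
            exact_mod_cast this
          calc (∑ k ∈ Finset.Ioc J N, β (k-1)) * (1/(N:ℝ))
              ≤ (Real.sqrt A * (1 + Real.log N)) * (1/(N:ℝ)) :=
                mul_le_mul_of_nonneg_right (hQ N hLt) (by positivity)
            _ = Real.sqrt A * ((1 + Real.log N)/(N:ℝ)) := by ring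
            _ ≤ Real.sqrt A * ((1 + Real.log J)/(J:ℝ)) :=
                mul_le_mul_of_nonneg_left (aux_mono J N (by omega) hJN) hsA
            _ ≤ Real.sqrt A * (3 + Real.log J) * (1/(J:ℝ)) := by
                rw [mul_assoc, mul_one_div]
                exact mul_le_mul_of_nonneg_left
                  ((div_le_div_iff_of_pos_right hJpos).mpr (by linarith)) hsA
        have hIoo : Finset.Ioo J N = Finset.Ioc J (N-1) := by
          ext x
          simp only [Finset.mem_Ioo, Finset.mem_Ioc]
          omega
        have hq2 : ∑ l ∈ Finset.Ioo J N, (1/(l:ℝ) - 1/((l:ℝ)+1)) * (∑ k ∈ Finset.Ioc J l, β (k-1))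
            ≤ Real.sqrt A * (3 + Real.log J) * (1/(J:ℝ)) := by
          set F : ℕ → ℝ := fun m => (3 + Real.log m)/(m:ℝ) with hFdef
          have hper : ∀ l ∈ Finset.Ioo J N,
              (1/(l:ℝ) - 1/((l:ℝ)+1)) * (∑ k ∈ Finset.Ioc J l, β (k-1))
              ≤ Real.sqrt A * (F (l-1) - F l) := by
            intro l hl
            rw [Finset.mem_Ioo] at hl
            have hl2 : 2 ≤ l := by omega
            have hlpos : (0:ℝ) < (l:ℝ) := by
              have : (0:ℕ) < l := by omega
              exact_mod_cast this
            have t1 : (1:ℝ)/(l:ℝ) - 1/((l:ℝ)+1) ≤ 1/(l:ℝ)^2 := by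
              have e : (1:ℝ)/(l:ℝ) - 1/((l:ℝ)+1) = 1/((l:ℝ)*((l:ℝ)+1)) := by
                field_simp; ring
              rw [e]
              apply one_div_le_one_div_of_le (by positivity)
              nlinarith [hlpos]
            have t2 : ∑ k ∈ Finset.Ioc J l, β (k-1) ≤ Real.sqrt A * (1 + Real.log l) :=
              hQ l hl.1
            have t3 : (0:ℝ) ≤ ∑ k ∈ Finset.Ioc J l, β (k-1) :=
              Finset.sum_nonneg (fun k _ => hβ _)
            have t4 : (0:ℝ) ≤ 1 + Real.log l := by
              have : (0:ℝ) ≤ Real.log l := Real.log_nonneg (by exact_mod_cast Nat.one_le_of_lt hl2)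
              linarith
            calc (1/(l:ℝ) - 1/((l:ℝ)+1)) * (∑ k ∈ Finset.Ioc J l, β (k-1))
                ≤ (1/(l:ℝ)^2) * (Real.sqrt A * (1 + Real.log l)) := by
                  apply mul_le_mul t1 t2 t3 (by positivity)
              _ = Real.sqrt A * ((1 + Real.log l)/(l:ℝ)^2) := by ring
              _ ≤ Real.sqrt A * (F (l-1) - F l) :=
                  mul_le_mul_of_nonneg_left (aux_step l hl2) hsA
          refine (Finset.sum_le_sum hper).trans ?_
          rw [← Finset.mul_sum, hIoo, aux_telescope F J (N-1) (by omega)]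
          have hFN : 0 ≤ F (N-1) := by
            rw [hFdef]
            have h1 : (1:ℕ) ≤ N - 1 := by omega
            have h2 : (0:ℝ) ≤ Real.log ((N-1:ℕ):ℝ) := Real.log_nonneg (by exact_mod_cast h1)
            positivity
          have hFJ : F J = (3 + Real.log J)/(J:ℝ) := by rw [hFdef]
          rw [mul_assoc, mul_one_div]
          apply mul_le_mul_of_nonneg_left _ hsA
          rw [← hFJ]
          linarith
        calc (∑ k ∈ Finset.Ioc J N, β (k-1)) * (1/(N:ℝ))
              + ∑ l ∈ Finset.Ioo J N, (1/(l:ℝ) - 1/((l:ℝ)+1)) * (∑ k ∈ Finset.Ioc J l, β (k-1))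
            ≤ Real.sqrt A * (3 + Real.log J) * (1/(J:ℝ))
              + Real.sqrt A * (3 + Real.log J) * (1/(J:ℝ)) := add_le_add hq1 hq2
          _ = 2 * Real.sqrt A * (3 + Real.log J) * (1/(J:ℝ)) := by ring
    -- final assembly
    have hfinal : ‖(∑ j ∈ Finset.Ioc J n, w j) * c n
        + ∑ k ∈ Finset.Ico (J+1) n, (∑ j ∈ Finset.Ioc J k, w j) * (c k - c (k+1))‖
        ≤ 8/3 + (8/3) * ξ⁻¹ * (B * Sb + St) :=
      (norm_add_le _ _).trans (add_le_add hT1 hT2)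
    have hxiJ : ξ⁻¹ ≤ (J:ℝ) := hJ1
    have hSt0 : 0 ≤ St := by
      rw [hStdef]
      apply Finset.sum_nonneg
      intro k hk
      rw [Finset.mem_Ico] at hk
      have hkpos : (0:ℝ) < (k:ℝ) := by
        have : (0:ℕ) < k := by omega
        exact_mod_cast this
      have := one_div_le_one_div_of_le hkpos (by linarith : (k:ℝ) ≤ (k:ℝ)+1)
      linarith
    have hfin2 : (8/3) * ξ⁻¹ * (B * Sb + St) ≤ (16/3) * (B*Real.sqrt A) * (5 + L) + 8/3 := by
      have hxipos : (0:ℝ) < ξ⁻¹ := by positivity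
      have h1 : (8/3) * ξ⁻¹ * St ≤ 8/3 := by
        have : ξ⁻¹ * St ≤ ξ⁻¹ * ξ := mul_le_mul_of_nonneg_left hSt hxipos.le
        rw [inv_mul_cancel₀ (ne_of_gt hξ0)] at this
        nlinarith [this]
      have h2 : (8/3) * ξ⁻¹ * (B * Sb) ≤ (16/3) * (B*Real.sqrt A) * (5 + L) := by
        have s1 : ξ⁻¹ * Sb ≤ (J:ℝ) * Sb := mul_le_mul_of_nonneg_right hxiJ hSb0
        have s2 : (J:ℝ) * Sb ≤ (J:ℝ) * (2 * Real.sqrt A * (3 + Real.log J) * (1/(J:ℝ))) :=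
          mul_le_mul_of_nonneg_left hSb2 hJpos.le
        have s3 : (J:ℝ) * (2 * Real.sqrt A * (3 + Real.log J) * (1/(J:ℝ)))
            = 2 * Real.sqrt A * (3 + Real.log J) := by
          field_simp
        have s4 : (3:ℝ) + Real.log J ≤ 5 + L := by linarith
        have s5 : ξ⁻¹ * Sb ≤ 2 * Real.sqrt A * (5 + L) := by
          have : 2 * Real.sqrt A * (3 + Real.log J) ≤ 2 * Real.sqrt A * (5 + L) :=
            mul_le_mul_of_nonneg_left s4 (by positivity)
          linarith [s1, s2, s3 ▸ s2]
        nlinarith [s5, hB, mul_nonneg hxipos.le hSb0]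
      nlinarith [h1, h2]
    have hBsA : 0 ≤ B * Real.sqrt A := mul_nonneg hB.le hsA
    calc ‖∑ j ∈ Finset.Icc 1 J, (j:ℂ)⁻¹ * Complex.exp (Complex.I * ((j:ℝ)*ξ + g j))‖
          + ‖(∑ j ∈ Finset.Ioc J n, w j) * c n
            + ∑ k ∈ Finset.Ico (J+1) n, (∑ j ∈ Finset.Ioc J k, w j) * (c k - c (k+1))‖
        ≤ (3 + L) + (8/3 + ((16/3) * (B*Real.sqrt A) * (5 + L) + 8/3)) := by
          apply add_le_add hS1 (hfinal.trans (by linarith [hfin2]))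
      _ ≤ (1 + 6*B*Real.sqrt A) * L + 30*(1 + B*Real.sqrt A) := by
          nlinarith [hL, hBsA, mul_nonneg hBsA hL]
end

section
/- Let (θ_n) be a sequence of real numbers and (α_n) ∈ ℓ²(ℕ, ℂ) with |θ_j − θ_{j−1}| ≤ C|α_{j−1}| for all j, and suppose the limits α̂(η, n) = lim_{N→∞} ∑_{j=n}^N α_j e^{ijη} exist and satisfy ∑_{j=1}^∞ |α̂(η, j)| |α_{j−1}| < ∞. Then the partial sums A(n) = ∑_{j=0}^{n−1} α_j e^{i[(j+1)η + β + 2θ_j]} are bounded uniformly in n, for every β ∈ ℝ. -/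
open Filter

/-- `|e^{it} - 1| ≤ |t|`. -/
lemma exp_I_sub_one_abs_le (t : ℝ) :
    ‖Complex.exp ((t : ℂ) * Complex.I) - 1‖ ≤ |t| := by
  have hre : (Complex.exp ((t : ℂ) * Complex.I) - 1).re = Real.cos t - 1 := by
    simp [Complex.exp_ofReal_mul_I_re]
  have him : (Complex.exp ((t : ℂ) * Complex.I) - 1).im = Real.sin t := by
    simp [Complex.exp_ofReal_mul_I_im]
  have hsq : (‖Complex.exp ((t : ℂ) * Complex.I) - 1‖) ^ 2
      = 2 - 2 * Real.cos t := by
    rw [Complex.sq_norm, Complex.normSq_apply, hre, him]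
    have := Real.sin_sq_add_cos_sq t
    nlinarith [this]
  have hcos : Real.cos t = 1 - 2 * Real.sin (t / 2) ^ 2 := by
    have h2 : Real.cos t = 2 * Real.cos (t / 2) ^ 2 - 1 := by
      have := Real.cos_two_mul (t / 2)
      rwa [show (2 : ℝ) * (t / 2) = t by ring] at this
    have h3 : Real.sin (t / 2) ^ 2 + Real.cos (t / 2) ^ 2 = 1 :=
      Real.sin_sq_add_cos_sq (t / 2)
    nlinarith [h2, h3]
  have hsq2 : (‖Complex.exp ((t : ℂ) * Complex.I) - 1‖) ^ 2
      = (2 * |Real.sin (t / 2)|) ^ 2 := by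
    rw [hsq, hcos]
    have : |Real.sin (t / 2)| ^ 2 = Real.sin (t / 2) ^ 2 := sq_abs _
    nlinarith [this]
  have habs : ‖Complex.exp ((t : ℂ) * Complex.I) - 1‖
      = 2 * |Real.sin (t / 2)| := by
    have h1 : (0 : ℝ) ≤ ‖Complex.exp ((t : ℂ) * Complex.I) - 1‖ :=
      norm_nonneg _
    have h2 : (0 : ℝ) ≤ 2 * |Real.sin (t / 2)| := by positivity
    nlinarith [hsq2]
  rw [habs]
  have := Real.abs_sin_le_abs (x := t / 2)
  rw [abs_div] at this
  simp only [abs_two] at this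
  linarith

/-- `|e^{ix} - e^{iy}| ≤ |x - y|`. -/
lemma exp_I_sub_exp_I_abs_le (x y : ℝ) :
    ‖Complex.exp ((x : ℂ) * Complex.I) - Complex.exp ((y : ℂ) * Complex.I)‖
      ≤ |x - y| := by
  have h : Complex.exp ((x : ℂ) * Complex.I) - Complex.exp ((y : ℂ) * Complex.I)
      = Complex.exp ((y : ℂ) * Complex.I)
        * (Complex.exp (((x - y : ℝ) : ℂ) * Complex.I) - 1) := by
    rw [mul_sub, mul_one, ← Complex.exp_add]
    push_cast
    ring_nf
  rw [h, norm_mul, Complex.norm_exp_ofReal_mul_I, one_mul]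
  exact exp_I_sub_one_abs_le (x - y)

/-- Boundedness criterion for the Prüfer phase sums: if the tails
`α̂(η,n) = ∑_{j≥n} α_j e^{ijη}` exist and `∑_j |α̂(η,j)||α_{j-1}| < ∞`, and the phase
increments obey `|θ_j - θ_{j-1}| ≤ C|α_{j-1}|`, then the partial sums
`A(n) = ∑_{j<n} α_j e^{i[(j+1)η + β + 2θ_j]}` are bounded uniformly in `n`. -/
theorem stmt13 (η β : ℝ) (α : ℕ → ℂ) (hα : Summable (fun n => ‖α n‖ ^ 2))
    (θ : ℕ → ℝ) (C : ℝ) (hC : 0 < C)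
    (hθ : ∀ j : ℕ, 1 ≤ j → |θ j - θ (j - 1)| ≤ C * ‖α (j - 1)‖)
    (ahat : ℕ → ℂ)
    (hconv : ∀ n : ℕ, Tendsto (fun N : ℕ => ∑ j ∈ Finset.Icc n N,
        α j * Complex.exp (Complex.I * j * η)) atTop (nhds (ahat n)))
    (hsum : Summable (fun j : ℕ => ‖ahat (j + 1)‖ * ‖α j‖)) :
    ∃ M : ℝ, ∀ n : ℕ,
      ‖∑ j ∈ Finset.range n,
        α j * Complex.exp (Complex.I * (((j : ℝ) + 1) * η + β + 2 * θ j))‖ ≤ M := by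
  set e : ℕ → ℂ := fun j => α j * Complex.exp (Complex.I * j * η) with he
  -- key telescoping identity: e n = ahat n - ahat (n+1)
  have key : ∀ n : ℕ, e n = ahat n - ahat (n + 1) := by
    intro n
    have h1 : Tendsto (fun N : ℕ => e n + ∑ j ∈ Finset.Icc (n + 1) N,
        α j * Complex.exp (Complex.I * j * η)) atTop (nhds (e n + ahat (n + 1))) :=
      tendsto_const_nhds.add (hconv (n + 1))
    have h2 : Tendsto (fun N : ℕ => ∑ j ∈ Finset.Icc n N,
        α j * Complex.exp (Complex.I * j * η)) atTop (nhds (e n + ahat (n + 1))) := by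
      apply h1.congr'
      filter_upwards [eventually_ge_atTop n] with N hN
      rw [Finset.Icc_add_one_left_eq_Ioc, ← Finset.Ioc_insert_left hN,
        Finset.sum_insert (by simp)]
    have h3 := tendsto_nhds_unique (hconv n) h2
    rw [h3]; ring
  -- partial sums of e
  set P : ℕ → ℂ := fun n => ∑ j ∈ Finset.range n, e j with hP
  have hPa : ∀ n : ℕ, P n = ahat 0 - ahat n := by
    intro n
    simp only [hP]
    calc ∑ j ∈ Finset.range n, e j
        = ∑ j ∈ Finset.range n, (ahat j - ahat (j + 1)) := by
          exact Finset.sum_congr rfl fun j _ => key j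
      _ = ahat 0 - ahat n := Finset.sum_range_sub' ahat n
  -- bound on |ahat n|
  have hbdd : BddAbove (Set.range fun N : ℕ =>
      ‖∑ j ∈ Finset.Icc 0 N, α j * Complex.exp (Complex.I * j * η)‖) := by
    have : Tendsto (fun N : ℕ =>
        ‖∑ j ∈ Finset.Icc 0 N, α j * Complex.exp (Complex.I * j * η)‖)
        atTop (nhds (‖ahat 0‖)) := (continuous_norm.tendsto _).comp (hconv 0)
    exact this.isBoundedUnder_le.bddAbove_range
  obtain ⟨K, hK⟩ := hbdd
  have hK' : ∀ N : ℕ, ‖∑ j ∈ Finset.Icc 0 N,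
      α j * Complex.exp (Complex.I * j * η)‖ ≤ K := fun N => hK (Set.mem_range_self N)
  have hK0 : 0 ≤ K := le_trans (norm_nonneg _) (hK' 0)
  set B : ℝ := ‖ahat 0‖ + K with hB
  have hahat : ∀ n : ℕ, ‖ahat n‖ ≤ B := by
    intro n
    cases n with
    | zero => simp [hB]; linarith
    | succ m =>
      have : ahat (m + 1) = ahat 0 - P (m + 1) := by
        rw [hPa (m + 1)]; ring
      rw [this]
      have hPm : ‖P (m + 1)‖ ≤ K := by
        have : P (m + 1) = ∑ j ∈ Finset.Icc 0 m, α j * Complex.exp (Complex.I * j * η) := by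
          simp only [hP, he]
          rw [← Finset.Ico_add_one_right_eq_Icc, Nat.Ico_zero_eq_range]
        rw [this]; exact hK' m
      calc ‖ahat 0 - P (m + 1)‖
          ≤ ‖ahat 0‖ + ‖P (m + 1)‖ :=
            norm_sub_le _ _
        _ ≤ B := by rw [hB]; linarith
  -- the unimodular factors
  set c : ℕ → ℂ := fun j => Complex.exp (((η + β + 2 * θ j : ℝ) : ℂ) * Complex.I) with hc
  have hterm : ∀ j : ℕ,
      α j * Complex.exp (Complex.I * (((j : ℝ) + 1) * η + β + 2 * θ j)) = e j * c j := by
    intro j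
    simp only [he, hc, mul_assoc, ← Complex.exp_add]
    congr 2
    push_cast
    ring
  have hcdiff : ∀ j : ℕ, ‖c (j + 1) - c j‖ ≤ 2 * C * ‖α j‖ := by
    intro j
    have h1 : ‖c (j + 1) - c j‖
        ≤ |(η + β + 2 * θ (j + 1)) - (η + β + 2 * θ j)| :=
      exp_I_sub_exp_I_abs_le _ _
    have h2 : |(η + β + 2 * θ (j + 1)) - (η + β + 2 * θ j)| = 2 * |θ (j + 1) - θ j| := by
      rw [show (η + β + 2 * θ (j + 1)) - (η + β + 2 * θ j) = 2 * (θ (j + 1) - θ j) by ring,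
        abs_mul, abs_two]
    have h3 : |θ (j + 1) - θ j| ≤ C * ‖α j‖ := by
      have := hθ (j + 1) (by omega)
      simpa using this
    calc ‖c (j + 1) - c j‖ ≤ 2 * |θ (j + 1) - θ j| := h1.trans_eq h2
      _ ≤ 2 * (C * ‖α j‖) := by linarith
      _ = 2 * C * ‖α j‖ := by ring
  set T : ℝ := ∑' j : ℕ, ‖ahat (j + 1)‖ * ‖α j‖ with hT
  refine ⟨2 * B + 2 * C * T, fun n => ?_⟩
  have hsplit : ∑ j ∈ Finset.range n,
      α j * Complex.exp (Complex.I * (((j : ℝ) + 1) * η + β + 2 * θ j))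
      = (ahat 0 * c 0 - ahat n * c n)
        + ∑ j ∈ Finset.range n, ahat (j + 1) * (c (j + 1) - c j) := by
    calc ∑ j ∈ Finset.range n,
        α j * Complex.exp (Complex.I * (((j : ℝ) + 1) * η + β + 2 * θ j))
        = ∑ j ∈ Finset.range n, ((ahat j * c j - ahat (j + 1) * c (j + 1))
            + ahat (j + 1) * (c (j + 1) - c j)) := by
          refine Finset.sum_congr rfl fun j _ => ?_
          rw [hterm j, key j]; ring
      _ = (∑ j ∈ Finset.range n, (ahat j * c j - ahat (j + 1) * c (j + 1)))
            + ∑ j ∈ Finset.range n, ahat (j + 1) * (c (j + 1) - c j) :=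
          Finset.sum_add_distrib
      _ = (ahat 0 * c 0 - ahat n * c n)
            + ∑ j ∈ Finset.range n, ahat (j + 1) * (c (j + 1) - c j) := by
          rw [Finset.sum_range_sub' (fun j => ahat j * c j) n]
  rw [hsplit]
  have hcabs : ∀ j : ℕ, ‖c j‖ = 1 := fun j => Complex.norm_exp_ofReal_mul_I _
  have h1 : ‖ahat 0 * c 0 - ahat n * c n‖ ≤ 2 * B := by
    calc ‖ahat 0 * c 0 - ahat n * c n‖
        ≤ ‖ahat 0 * c 0‖ + ‖ahat n * c n‖ :=
          norm_sub_le _ _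
      _ = ‖ahat 0‖ + ‖ahat n‖ := by
          rw [norm_mul, norm_mul, hcabs 0, hcabs n, mul_one, mul_one]
      _ ≤ 2 * B := by have := hahat 0; have := hahat n; linarith
  have h2 : ‖∑ j ∈ Finset.range n, ahat (j + 1) * (c (j + 1) - c j)‖
      ≤ 2 * C * T := by
    calc ‖∑ j ∈ Finset.range n, ahat (j + 1) * (c (j + 1) - c j)‖
        ≤ ∑ j ∈ Finset.range n, ‖ahat (j + 1) * (c (j + 1) - c j)‖ :=
          norm_sum_le _ _
      _ ≤ ∑ j ∈ Finset.range n, 2 * C * (‖ahat (j + 1)‖ * ‖α j‖) := by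
          refine Finset.sum_le_sum fun j _ => ?_
          rw [norm_mul]
          calc ‖ahat (j + 1)‖ * ‖c (j + 1) - c j‖
              ≤ ‖ahat (j + 1)‖ * (2 * C * ‖α j‖) :=
                mul_le_mul_of_nonneg_left (hcdiff j) (norm_nonneg _)
            _ = 2 * C * (‖ahat (j + 1)‖ * ‖α j‖) := by ring
      _ = 2 * C * ∑ j ∈ Finset.range n, ‖ahat (j + 1)‖ * ‖α j‖ := by
          rw [Finset.mul_sum]
      _ ≤ 2 * C * T := by
          refine mul_le_mul_of_nonneg_left ?_ (by linarith)
          exact Summable.sum_le_tsum _ (fun j _ => by positivity) hsum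
  calc ‖(ahat 0 * c 0 - ahat n * c n)
        + ∑ j ∈ Finset.range n, ahat (j + 1) * (c (j + 1) - c j)‖
      ≤ ‖ahat 0 * c 0 - ahat n * c n‖
        + ‖∑ j ∈ Finset.range n, ahat (j + 1) * (c (j + 1) - c j)‖ :=
        norm_add_le _ _
    _ ≤ 2 * B + 2 * C * T := by linarith
end

section
/- Suppose (α_n) satisfies ∑_{n=0}^N (n+1)|α_n|² ≤ A log N for all N ≥ 2. Equip ℂⁿ with the inner product ⟨f,g⟩ = ∑_{j=0}^{n−1} conj(f(j)) g(j) (1+j). Suppose η_1, …, η_K ∈ [0,2π) satisfy min_{k≠l} d(η_k, η_l) ≥ n^{-1/(3K²)}, and that for each l, |∑_{j=0}^{n−1} α_j e^{i[(j+1)η_l + 2θ_j(η_l)]}| ≥ (log n)/14, where θ_j(η) are real phases satisfying |θ_j(η) − θ_{j−1}(η)| ≤ C|α_{j−1}|. Then there exist n₀ and K_max (depending only on A and C) such that K ≤ K_max whenever n ≥ n₀. -/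
open Real

noncomputable def Complex.abs : AbsoluteValue ℂ ℝ := IsAbsoluteValue.toAbsoluteValue (norm : ℂ → ℝ)

lemma Complex.abs_apply' (z : ℂ) : Complex.abs z = ‖z‖ := rfl

lemma Complex.abs_ofReal (r : ℝ) : Complex.abs (r : ℂ) = |r| := by
  rw [Complex.abs_apply']; simp

lemma Complex.abs_conj (z : ℂ) : Complex.abs ((starRingEnd ℂ) z) = Complex.abs z := by
  simp [Complex.abs_apply']

lemma Complex.abs_add_mul_I (x y : ℝ) :
    Complex.abs (x + y * Complex.I) = Real.sqrt (x ^ 2 + y ^ 2) := by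
  rw [Complex.abs_apply', Complex.norm_def, Complex.normSq_add_mul_I]

lemma Complex.sq_abs (z : ℂ) : Complex.abs z ^ 2 = Complex.normSq z := Complex.sq_norm z

open Finset in
private lemma sum_mul_le_sqrt (s : Finset ℕ) (f g : ℕ → ℝ) :
    ∑ i ∈ s, f i * g i ≤ Real.sqrt (∑ i ∈ s, f i ^ 2) * Real.sqrt (∑ i ∈ s, g i ^ 2) := by
  calc ∑ i ∈ s, f i * g i ≤ |∑ i ∈ s, f i * g i| := le_abs_self _
    _ = Real.sqrt ((∑ i ∈ s, f i * g i) ^ 2) := (Real.sqrt_sq_eq_abs _).symm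
    _ ≤ Real.sqrt ((∑ i ∈ s, f i ^ 2) * ∑ i ∈ s, g i ^ 2) :=
        Real.sqrt_le_sqrt (Finset.sum_mul_sq_le_sq_mul_sq s f g)
    _ = _ := Real.sqrt_mul (by positivity) _

private lemma harm_le (m : ℕ) : ∑ i ∈ Finset.range m, (1:ℝ)/((i:ℝ)+1) ≤ Real.log m + 1 := by
  have h : ∑ i ∈ Finset.range m, (1:ℝ)/((i:ℝ)+1) = (harmonic m : ℝ) := by
    rw [harmonic]
    push_cast
    refine Finset.sum_congr rfl fun i _ => ?_
    rw [one_div]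
  rw [h]
  have := harmonic_le_one_add_log m
  linarith

private lemma abs_exp_I_mul_sub_one (x : ℝ) :
    Complex.abs (Complex.exp (Complex.I * x) - 1) = 2 * |Real.sin (x / 2)| := by
  have h1 : Complex.I * (x:ℂ) = (x:ℂ) * Complex.I := mul_comm _ _
  have h2 : Complex.exp (Complex.I * x) - 1
      = Complex.ofReal (Real.cos x - 1) + Complex.ofReal (Real.sin x) * Complex.I := by
    rw [h1, Complex.exp_mul_I]
    push_cast
    ring
  rw [h2, Complex.abs_add_mul_I]
  have hs : Real.sin (x/2) ^ 2 = 1/2 - Real.cos x / 2 := by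
    have := Real.sin_sq_eq_half_sub (x/2)
    rwa [show 2 * (x/2) = x by ring] at this
  have : (Real.cos x - 1)^2 + Real.sin x ^2 = (2 * |Real.sin (x/2)|)^2 := by
    have hpy := Real.sin_sq_add_cos_sq x
    have habs : |Real.sin (x/2)|^2 = Real.sin (x/2)^2 := sq_abs _
    nlinarith
  rw [this, Real.sqrt_sq (by positivity)]

private lemma abs_exp_I_mul_sub_exp_I_mul (x y : ℝ) :
    Complex.abs (Complex.exp (Complex.I * x) - Complex.exp (Complex.I * y)) ≤ |x - y| := by
  have h : Complex.exp (Complex.I * x) - Complex.exp (Complex.I * y)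
      = Complex.exp (Complex.I * y) * (Complex.exp (Complex.I * ((x:ℝ) - y)) - 1) := by
    rw [mul_sub, ← Complex.exp_add, mul_one]
    push_cast
    ring_nf
  rw [h, map_mul]
  have h1 : Complex.abs (Complex.exp (Complex.I * y)) = 1 := by
    rw [mul_comm]
    exact Complex.norm_exp_ofReal_mul_I y
  rw [h1, one_mul, ← Complex.ofReal_sub, abs_exp_I_mul_sub_one]
  have := Real.abs_sin_le_abs (x := (x - y)/2)
  rw [abs_div] at this
  simp only [abs_two] at this
  linarith [this]


private lemma norm_addCircle_le_pi (x : ℝ) : ‖((x:ℝ) : AddCircle (2*π))‖ ≤ π := by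
  rw [AddCircle.norm_eq]
  have h := abs_sub_round ((2*π)⁻¹ * x)
  have hπ : (0:ℝ) < π := Real.pi_pos
  have : x - round ((2*π)⁻¹ * x) * (2*π) = (((2*π)⁻¹ * x) - round ((2*π)⁻¹ * x)) * (2*π) := by
    field_simp
  rw [this, abs_mul, abs_of_pos (by positivity : (0:ℝ) < 2*π)]
  nlinarith

private lemma sin_half_ge (x : ℝ) (δ : ℝ) (hδ : δ ≤ ‖((x:ℝ) : AddCircle (2*π))‖) :
    δ / π ≤ |Real.sin (x / 2)| := by
  have hπ : (0:ℝ) < π := Real.pi_pos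
  set k := round ((2*π)⁻¹ * x) with hk
  set y := x - k * (2*π) with hy
  have hnorm : ‖((x:ℝ) : AddCircle (2*π))‖ = |y| := by
    rw [AddCircle.norm_eq]
  have hyπ : |y| ≤ π := by
    rw [← hnorm]; exact norm_addCircle_le_pi x
  have hδy : δ ≤ |y| := by rw [← hnorm]; exact hδ
  have hsin : Real.sin (x/2) = (-1)^k * Real.sin (y/2) := by
    have hxy : x / 2 = y/2 + k * π := by rw [hy]; ring
    rw [hxy, Real.sin_add_int_mul_pi]
  have habs : |Real.sin (x/2)| = |Real.sin (y/2)| := by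
    rw [hsin, abs_mul]
    have : |((-1:ℝ))^k| = 1 := by
      rcases Int.even_or_odd k with he | ho
      · rw [he.neg_one_zpow]; simp
      · rw [Odd.neg_one_zpow ho]; simp
    rw [this, one_mul]
  rw [habs]
  have h2 : |Real.sin (y/2)| = Real.sin (|y|/2) := by
    rcases le_or_gt 0 y with h | h
    · rw [abs_of_nonneg h, abs_of_nonneg]
      exact Real.sin_nonneg_of_nonneg_of_le_pi (by linarith) (by rw [abs_of_nonneg h] at hyπ; linarith)
    · have hyπ' : -π ≤ y := by rw [abs_of_neg h] at hyπ; linarith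
      rw [abs_of_neg h, abs_of_nonpos, ← Real.sin_neg]
      · ring_nf
      · exact Real.sin_nonpos_of_nonpos_of_neg_pi_le (by linarith) (by linarith)
  rw [h2]
  have hJ := Real.mul_le_sin (x := |y|/2) (by positivity) (by linarith)
  calc δ / π = 2/π * (δ/2) := by ring
    _ ≤ 2/π * (|y|/2) := by gcongr
    _ ≤ Real.sin (|y|/2) := hJ


private lemma abs_Dsum_le (x : ℝ) (δ : ℝ) (hδ0 : 0 < δ) (hδ : δ ≤ ‖((x:ℝ) : AddCircle (2*π))‖)
    (m : ℕ) :
    Complex.abs (∑ j ∈ Finset.range m, Complex.exp (Complex.I * (((j:ℝ)+1) * x))) ≤ π / δ := by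
  have hπ : (0:ℝ) < π := Real.pi_pos
  set z := Complex.exp (Complex.I * x) with hz
  have hsin : δ / π ≤ |Real.sin (x/2)| := sin_half_ge x δ hδ
  have hz1 : Complex.abs (z - 1) = 2 * |Real.sin (x/2)| := abs_exp_I_mul_sub_one x
  have hz1pos : 0 < Complex.abs (z - 1) := by
    rw [hz1]; have : 0 < δ / π := by positivity
    linarith
  have hzne : z ≠ 1 := by
    intro h
    rw [h] at hz1pos; simp at hz1pos
  have habsz : Complex.abs z = 1 := by rw [hz, mul_comm]; exact Complex.norm_exp_ofReal_mul_I x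
  have hterm : ∀ j : ℕ, j ∈ Finset.range m →
      Complex.exp (Complex.I * (((j:ℝ)+1) * x)) = z ^ (j+1) := by
    intro j _
    rw [hz, ← Complex.exp_nat_mul]
    congr 1; push_cast; ring
  rw [Finset.sum_congr rfl hterm]
  have hsum : ∑ j ∈ Finset.range m, z^(j+1) = z * ((z^m - 1) / (z - 1)) := by
    rw [← geom_sum_eq hzne, Finset.mul_sum]
    exact Finset.sum_congr rfl fun j _ => pow_succ' z j
  rw [hsum, map_mul, map_div₀, habsz, one_mul]
  have hnum : Complex.abs (z^m - 1) ≤ 2 := by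
    calc Complex.abs (z^m - 1) ≤ Complex.abs (z^m) + 1 := by
          simpa using Complex.abs.sub_le_add (z^m) 1
      _ ≤ 2 := by rw [map_pow, habsz, one_pow]; norm_num
  calc Complex.abs (z^m - 1) / Complex.abs (z - 1) ≤ 2 / (2 * (δ/π)) := by
        apply div_le_div₀ (by norm_num) hnum (by positivity)
        rw [hz1]
        have : 2 * (δ/π) = 2 * (δ/π) := rfl
        nlinarith
    _ = π / δ := by field_simp


private lemma abs_exp_I_mul (r : ℝ) : Complex.abs (Complex.exp (Complex.I * r)) = 1 := by
  rw [mul_comm]; exact Complex.norm_exp_ofReal_mul_I r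

private lemma abs_Dsum_le_card (x : ℝ) (m : ℕ) :
    Complex.abs (∑ j ∈ Finset.range m, Complex.exp (Complex.I * (((j:ℝ)+1) * x))) ≤ m := by
  calc Complex.abs (∑ j ∈ Finset.range m, Complex.exp (Complex.I * (((j:ℝ)+1) * x)))
      ≤ ∑ j ∈ Finset.range m, Complex.abs (Complex.exp (Complex.I * (((j:ℝ)+1) * x))) :=
        Complex.abs.sum_le _ _
    _ = m := by
        rw [Finset.sum_congr rfl fun j _ => ?_, Finset.sum_const, Finset.card_range,
          nsmul_eq_mul, mul_one]
        show Complex.abs (Complex.exp (Complex.I * (((j:ℝ)+1) * x))) = 1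
        rw [show ((((j:ℝ)):ℂ)+1) * (x:ℂ) = ((((j:ℝ)+1) * x : ℝ) : ℂ) by push_cast; ring]
        exact abs_exp_I_mul _

private lemma core_abel (n : ℕ) (hn : 1 ≤ n) (x : ℝ) (g c : ℕ → ℝ)
    (hc : ∀ i, |g (i+1) - g i| ≤ c i) (δ : ℝ) (hδ0 : 0 < δ)
    (hδ : δ ≤ ‖((x:ℝ) : AddCircle (2*π))‖) :
    Complex.abs (∑ j ∈ Finset.range n,
        Complex.exp (Complex.I * (((j:ℝ)+1) * x + g j)) * (1/((j:ℝ)+1))) ≤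
      π/(δ*n) + ∑ i ∈ Finset.range (n-1),
        min ((i:ℝ)+1) (π/δ) * (c i/((i:ℝ)+1) + 1/(((i:ℝ)+1)*((i:ℝ)+2))) := by
  have hπ : (0:ℝ) < π := Real.pi_pos
  set f : ℕ → ℂ := fun i => Complex.exp (Complex.I * (g i : ℝ)) * (1/((i:ℝ)+1)) with hf
  set G : ℕ → ℂ := fun i => Complex.exp (Complex.I * (((i:ℝ)+1) * x)) with hG
  have hsummand : ∀ j ∈ Finset.range n,
      Complex.exp (Complex.I * (((j:ℝ)+1) * x + g j)) * ((1:ℂ)/((j:ℝ)+1)) = f j • G j := by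
    intro j _
    rw [hf, hG, smul_eq_mul]
    simp only []
    rw [show (Complex.I * ((((j:ℝ):ℂ)+1) * (x:ℂ) + ((g j : ℝ):ℂ)))
        = Complex.I * ((((j:ℝ):ℂ)+1) * (x:ℂ)) + Complex.I * ((g j : ℝ):ℂ) by ring,
      Complex.exp_add]
    ring
  rw [Finset.sum_congr rfl hsummand, Finset.sum_range_by_parts f G n]
  have habsf : ∀ i : ℕ, Complex.abs (f i) = 1/((i:ℝ)+1) := by
    intro i
    rw [hf]
    simp only []
    rw [show ((1:ℂ)/(((i:ℝ):ℂ)+1)) = (((1/((i:ℝ)+1) : ℝ)):ℂ) by push_cast; ring,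
      map_mul, abs_exp_I_mul, one_mul, Complex.abs_ofReal, abs_of_nonneg (by positivity)]
  have hD : ∀ m : ℕ, Complex.abs (∑ j ∈ Finset.range m, G j) ≤ min ((m:ℝ)) (π/δ) :=
    fun m => le_min (abs_Dsum_le_card x m) (abs_Dsum_le x δ hδ0 hδ m)
  have hdiff : ∀ i : ℕ, Complex.abs (f (i+1) - f i)
      ≤ c i/((i:ℝ)+1) + 1/(((i:ℝ)+1)*((i:ℝ)+2)) := by
    intro i
    have hi1 : (0:ℝ) < (i:ℝ)+1 := by positivity
    have hi2 : (0:ℝ) < (i:ℝ)+2 := by positivity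
    have hci : 0 ≤ c i := le_trans (abs_nonneg _) (hc i)
    have hsplit : f (i+1) - f i
        = (Complex.exp (Complex.I * (g (i+1) : ℝ)) - Complex.exp (Complex.I * (g i : ℝ)))
            * (((1/((i:ℝ)+2) : ℝ)):ℂ)
          + Complex.exp (Complex.I * (g i : ℝ)) * (((1/((i:ℝ)+2) - 1/((i:ℝ)+1) : ℝ)):ℂ) := by
      rw [hf]
      simp only []
      push_cast
      ring
    calc Complex.abs (f (i+1) - f i)
        ≤ Complex.abs ((Complex.exp (Complex.I * (g (i+1) : ℝ))
              - Complex.exp (Complex.I * (g i : ℝ))) * (((1/((i:ℝ)+2) : ℝ)):ℂ))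
          + Complex.abs (Complex.exp (Complex.I * (g i : ℝ))
              * (((1/((i:ℝ)+2) - 1/((i:ℝ)+1) : ℝ)):ℂ)) := by
          rw [hsplit]; exact Complex.abs.add_le _ _
      _ ≤ c i * (1/((i:ℝ)+2)) + 1 * (1/((i:ℝ)+1) - 1/((i:ℝ)+2)) := by
          rw [map_mul, map_mul, abs_exp_I_mul, Complex.abs_ofReal, Complex.abs_ofReal]
          have e1 : |1/((i:ℝ)+2)| = 1/((i:ℝ)+2) := abs_of_nonneg (by positivity)
          have e2 : |1/((i:ℝ)+2) - 1/((i:ℝ)+1)| = 1/((i:ℝ)+1) - 1/((i:ℝ)+2) := by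
            rw [abs_of_nonpos]
            · ring
            · rw [sub_nonpos]
              gcongr
              linarith
          rw [e1, e2]
          exact add_le_add (mul_le_mul_of_nonneg_right
            ((abs_exp_I_mul_sub_exp_I_mul _ _).trans (hc i)) (by positivity)) le_rfl
      _ ≤ c i/((i:ℝ)+1) + 1/(((i:ℝ)+1)*((i:ℝ)+2)) := by
          have h1 : c i * (1/((i:ℝ)+2)) ≤ c i / ((i:ℝ)+1) := by
            have key : (1:ℝ)/((i:ℝ)+2) ≤ 1/((i:ℝ)+1) :=
              one_div_le_one_div_of_le hi1 (by linarith)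
            calc c i * (1/((i:ℝ)+2)) ≤ c i * (1/((i:ℝ)+1)) :=
                mul_le_mul_of_nonneg_left key hci
              _ = c i / ((i:ℝ)+1) := (div_eq_mul_one_div _ _).symm
          have h2 : 1 * (1/((i:ℝ)+1) - 1/((i:ℝ)+2)) = 1/(((i:ℝ)+1)*((i:ℝ)+2)) := by
            field_simp
            ring
          linarith
  calc Complex.abs (f (n-1) • ∑ i ∈ Finset.range n, G i
        - ∑ i ∈ Finset.range (n-1), (f (i+1) - f i) • ∑ j ∈ Finset.range (i+1), G j)
      ≤ Complex.abs (f (n-1) • ∑ i ∈ Finset.range n, G i)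
        + Complex.abs (∑ i ∈ Finset.range (n-1), (f (i+1) - f i) • ∑ j ∈ Finset.range (i+1), G j) :=
        Complex.abs.sub_le_add _ _
    _ ≤ π/(δ*n) + ∑ i ∈ Finset.range (n-1),
        min ((i:ℝ)+1) (π/δ) * (c i/((i:ℝ)+1) + 1/(((i:ℝ)+1)*((i:ℝ)+2))) := by
        gcongr
        · -- boundary term
          rw [smul_eq_mul, map_mul, habsf]
          have hcast : (((n-1 : ℕ):ℝ)) + 1 = (n:ℝ) := by
            have := Nat.cast_sub hn (R := ℝ)
            push_cast at this ⊢
            rw [this]; ring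
          rw [hcast]
          calc (1/(n:ℝ)) * Complex.abs (∑ i ∈ Finset.range n, G i)
              ≤ (1/(n:ℝ)) * (π/δ) := by
                gcongr
                exact abs_Dsum_le x δ hδ0 hδ n
            _ = π/(δ*(n:ℝ)) := by
                rw [one_div_mul_eq_div, div_div]
        · -- main sum
          calc Complex.abs (∑ i ∈ Finset.range (n-1), (f (i+1) - f i) • ∑ j ∈ Finset.range (i+1), G j)
              ≤ ∑ i ∈ Finset.range (n-1),
                Complex.abs ((f (i+1) - f i) • ∑ j ∈ Finset.range (i+1), G j) :=
              Complex.abs.sum_le _ _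
            _ ≤ ∑ i ∈ Finset.range (n-1),
                min ((i:ℝ)+1) (π/δ) * (c i/((i:ℝ)+1) + 1/(((i:ℝ)+1)*((i:ℝ)+2))) := by
                apply Finset.sum_le_sum
                intro i _
                rw [smul_eq_mul, map_mul, mul_comm]
                have hDi := hD (i+1)
                have : min (((i+1:ℕ)):ℝ) (π/δ) = min ((i:ℝ)+1) (π/δ) := by push_cast; rfl
                rw [this] at hDi
                exact mul_le_mul hDi (hdiff i) (Complex.abs.nonneg _)
                  (le_min (by positivity) (by positivity))


private lemma tele (a b : ℕ) :
    ∑ i ∈ Finset.Ico a b, ((1:ℝ)/((i:ℝ)+1) - 1/((i:ℝ)+2)) ≤ 1/((a:ℝ)+1) := by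
  rcases le_or_gt a b with h | h
  · set F : ℕ → ℝ := fun j => 1/(((a:ℝ)+(j:ℝ))+1) with hF
    have key := Finset.sum_range_sub' F (b-a)
    rw [Finset.sum_Ico_eq_sum_range]
    have hcongr : ∀ j ∈ Finset.range (b-a),
        ((1:ℝ)/(((a+j:ℕ):ℝ)+1) - 1/(((a+j:ℕ):ℝ)+2)) = F j - F (j+1) := by
      intro j _
      rw [hF]; push_cast; ring
    rw [Finset.sum_congr rfl hcongr, key]
    have h1 : F (b-a) ≥ 0 := by rw [hF]; positivity
    have h2 : F 0 = 1/((a:ℝ)+1) := by rw [hF]; norm_num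
    linarith
  · rw [Finset.Ico_eq_empty (by omega), Finset.sum_empty]
    positivity

private lemma filter_not_lt (N M' : ℕ) :
    (Finset.range N).filter (fun i => ¬ i < M') = Finset.Ico M' N := by
  ext i
  simp only [Finset.mem_filter, Finset.mem_range, Finset.mem_Ico, not_lt]
  omega

private lemma sumT1 (N : ℕ) (M : ℝ) (hM : 1 ≤ M) :
    ∑ i ∈ Finset.range N, min ((i:ℝ)+1) M * (1/(((i:ℝ)+1)*((i:ℝ)+2))) ≤ Real.log M + 3 := by
  have hM0 : (0:ℝ) < M := by linarith
  set M' := ⌈M⌉₊ with hM'def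
  have hMM' : M ≤ M' := Nat.le_ceil M
  have hM'M : (M':ℝ) ≤ M + 1 := le_of_lt (Nat.ceil_lt_add_one (by linarith))
  rw [← Finset.sum_filter_add_sum_filter_not (Finset.range N) (fun i => i < M')]
  have hpart1 : ∑ i ∈ (Finset.range N).filter (fun i => i < M'),
      min ((i:ℝ)+1) M * (1/(((i:ℝ)+1)*((i:ℝ)+2))) ≤ Real.log M + 2 := by
    calc ∑ i ∈ (Finset.range N).filter (fun i => i < M'),
        min ((i:ℝ)+1) M * (1/(((i:ℝ)+1)*((i:ℝ)+2)))
        ≤ ∑ i ∈ (Finset.range N).filter (fun i => i < M'), (1:ℝ)/((i:ℝ)+1) := by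
          apply Finset.sum_le_sum
          intro i _
          have h1 : (0:ℝ) < (i:ℝ)+1 := by positivity
          calc min ((i:ℝ)+1) M * (1/(((i:ℝ)+1)*((i:ℝ)+2)))
              ≤ ((i:ℝ)+1) * (1/(((i:ℝ)+1)*((i:ℝ)+2))) := by
                apply mul_le_mul_of_nonneg_right (min_le_left _ _) (by positivity)
            _ = 1/((i:ℝ)+2) := by field_simp
            _ ≤ 1/((i:ℝ)+1) := one_div_le_one_div_of_le h1 (by linarith)
      _ ≤ ∑ i ∈ Finset.range M', (1:ℝ)/((i:ℝ)+1) := by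
          apply Finset.sum_le_sum_of_subset_of_nonneg
          · intro i hi
            simp only [Finset.mem_filter, Finset.mem_range] at hi ⊢
            exact hi.2
          · intro i _ _; positivity
      _ ≤ Real.log M' + 1 := harm_le M'
      _ ≤ Real.log M + 2 := by
          have h1 : Real.log M' ≤ Real.log (M+1) := by
            apply Real.log_le_log (by positivity) hM'M
          have h2 : Real.log (M+1) ≤ Real.log (2*M) := by
            apply Real.log_le_log (by positivity) (by linarith)
          have h3 : Real.log (2*M) = Real.log 2 + Real.log M := Real.log_mul (by norm_num) (by positivity)
          have h4 : Real.log 2 ≤ 1 := by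
            have := Real.log_le_sub_one_of_pos (x := 2) (by norm_num)
            linarith
          linarith
  have hpart2 : ∑ i ∈ (Finset.range N).filter (fun i => ¬ i < M'),
      min ((i:ℝ)+1) M * (1/(((i:ℝ)+1)*((i:ℝ)+2))) ≤ 1 := by
    rw [filter_not_lt]
    calc ∑ i ∈ Finset.Ico M' N, min ((i:ℝ)+1) M * (1/(((i:ℝ)+1)*((i:ℝ)+2)))
        ≤ ∑ i ∈ Finset.Ico M' N, M * ((1:ℝ)/((i:ℝ)+1) - 1/((i:ℝ)+2)) := by
          apply Finset.sum_le_sum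
          intro i _
          have h1 : (0:ℝ) < (i:ℝ)+1 := by positivity
          have h2 : (0:ℝ) < (i:ℝ)+2 := by positivity
          have htel : (1:ℝ)/(((i:ℝ)+1)*((i:ℝ)+2)) = 1/((i:ℝ)+1) - 1/((i:ℝ)+2) := by
            field_simp; ring
          rw [htel]
          apply mul_le_mul_of_nonneg_right (min_le_right _ _)
          rw [← htel]; positivity
      _ = M * ∑ i ∈ Finset.Ico M' N, ((1:ℝ)/((i:ℝ)+1) - 1/((i:ℝ)+2)) := by
          rw [Finset.mul_sum]
      _ ≤ M * (1/((M':ℝ)+1)) := by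
          apply mul_le_mul_of_nonneg_left (tele M' N) (by positivity)
      _ ≤ M * (1/M) := by
          apply mul_le_mul_of_nonneg_left (one_div_le_one_div_of_le hM0 (by linarith)) (by positivity)
      _ = 1 := by field_simp
  linarith

private lemma sumT2 (N : ℕ) (M : ℝ) (hM : 1 ≤ M) (a : ℕ → ℝ) (ha : ∀ i, 0 ≤ a i) :
    ∑ i ∈ Finset.range N, min ((i:ℝ)+1) M * (a i/((i:ℝ)+1)) ≤
      Real.sqrt (∑ i ∈ Finset.range ⌈M⌉₊, ((i:ℝ)+1) * a i ^2) * Real.sqrt (Real.log M + 2)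
      + 2 * Real.sqrt (∑ i ∈ Finset.range N, ((i:ℝ)+1) * a i ^2) := by
  have hM0 : (0:ℝ) < M := by linarith
  set M' := ⌈M⌉₊ with hM'def
  have hMM' : M ≤ M' := Nat.le_ceil M
  have hM'M : (M':ℝ) ≤ M + 1 := le_of_lt (Nat.ceil_lt_add_one (by linarith))
  rw [← Finset.sum_filter_add_sum_filter_not (Finset.range N) (fun i => i < M')]
  have hpart1 : ∑ i ∈ (Finset.range N).filter (fun i => i < M'),
      min ((i:ℝ)+1) M * (a i/((i:ℝ)+1)) ≤
      Real.sqrt (∑ i ∈ Finset.range M', ((i:ℝ)+1) * a i ^2) * Real.sqrt (Real.log M + 2) := by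
    calc ∑ i ∈ (Finset.range N).filter (fun i => i < M'),
        min ((i:ℝ)+1) M * (a i/((i:ℝ)+1))
        ≤ ∑ i ∈ (Finset.range N).filter (fun i => i < M'), a i := by
          apply Finset.sum_le_sum
          intro i _
          have h1 : (0:ℝ) < (i:ℝ)+1 := by positivity
          calc min ((i:ℝ)+1) M * (a i/((i:ℝ)+1))
              ≤ ((i:ℝ)+1) * (a i/((i:ℝ)+1)) :=
                mul_le_mul_of_nonneg_right (min_le_left _ _)
                  (div_nonneg (ha i) (by positivity))
            _ = a i := by field_simp
      _ ≤ ∑ i ∈ Finset.range M', a i := by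
          apply Finset.sum_le_sum_of_subset_of_nonneg
          · intro i hi
            simp only [Finset.mem_filter, Finset.mem_range] at hi ⊢
            exact hi.2
          · intro i _ _; exact ha i
      _ = ∑ i ∈ Finset.range M',
            (Real.sqrt ((i:ℝ)+1) * a i) * (1/Real.sqrt ((i:ℝ)+1)) := by
          apply Finset.sum_congr rfl
          intro i _
          have hs : Real.sqrt ((i:ℝ)+1) ≠ 0 := by positivity
          rw [show (Real.sqrt ((i:ℝ)+1) * a i) * (1/Real.sqrt ((i:ℝ)+1))
            = a i * (Real.sqrt ((i:ℝ)+1)/Real.sqrt ((i:ℝ)+1)) by ring, div_self hs, mul_one]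
      _ ≤ Real.sqrt (∑ i ∈ Finset.range M', (Real.sqrt ((i:ℝ)+1) * a i)^2)
          * Real.sqrt (∑ i ∈ Finset.range M', (1/Real.sqrt ((i:ℝ)+1))^2) :=
          sum_mul_le_sqrt _ _ _
      _ ≤ Real.sqrt (∑ i ∈ Finset.range M', ((i:ℝ)+1) * a i ^2) * Real.sqrt (Real.log M + 2) := by
          have e1 : ∑ i ∈ Finset.range M', (Real.sqrt ((i:ℝ)+1) * a i)^2
              = ∑ i ∈ Finset.range M', ((i:ℝ)+1) * a i ^2 := by
            apply Finset.sum_congr rfl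
            intro i _
            rw [mul_pow, Real.sq_sqrt (by positivity)]
          rw [e1]
          apply mul_le_mul_of_nonneg_left _ (Real.sqrt_nonneg _)
          apply Real.sqrt_le_sqrt
          have e2 : ∑ i ∈ Finset.range M', (1/Real.sqrt ((i:ℝ)+1))^2
              = ∑ i ∈ Finset.range M', (1:ℝ)/((i:ℝ)+1) := by
            apply Finset.sum_congr rfl
            intro i _
            rw [div_pow, one_pow, Real.sq_sqrt (by positivity)]
          rw [e2]
          have h1 : Real.log M' ≤ Real.log M + 1 := by
            have ha1 : Real.log M' ≤ Real.log (2*M) :=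
              Real.log_le_log (by positivity) (by linarith)
            have ha2 : Real.log (2*M) = Real.log 2 + Real.log M :=
              Real.log_mul (by norm_num) (by positivity)
            have ha3 : Real.log 2 ≤ 1 := by
              have := Real.log_le_sub_one_of_pos (x := 2) (by norm_num)
              linarith
            linarith
          have := harm_le M'
          linarith
  have hpart2 : ∑ i ∈ (Finset.range N).filter (fun i => ¬ i < M'),
      min ((i:ℝ)+1) M * (a i/((i:ℝ)+1)) ≤
      2 * Real.sqrt (∑ i ∈ Finset.range N, ((i:ℝ)+1) * a i ^2) := by
    rw [filter_not_lt]
    have key : ∀ i ∈ Finset.Ico M' N, a i/((i:ℝ)+1)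
        = (Real.sqrt ((i:ℝ)+1) * a i) * (1/Real.sqrt (((i:ℝ)+1)^3)) := by
      intro i _
      have h1 : (0:ℝ) < (i:ℝ)+1 := by positivity
      have hsr : Real.sqrt ((i:ℝ)+1) / Real.sqrt (((i:ℝ)+1)^3) = 1/((i:ℝ)+1) := by
        rw [← Real.sqrt_div (by positivity),
          show ((i:ℝ)+1)/((i:ℝ)+1)^3 = (1/((i:ℝ)+1))^2 by field_simp]
        exact Real.sqrt_sq (by positivity)
      calc a i/((i:ℝ)+1) = a i * (1/((i:ℝ)+1)) := by ring
        _ = a i * (Real.sqrt ((i:ℝ)+1) / Real.sqrt (((i:ℝ)+1)^3)) := by rw [hsr]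
        _ = (Real.sqrt ((i:ℝ)+1) * a i) * (1/Real.sqrt (((i:ℝ)+1)^3)) := by ring
    calc ∑ i ∈ Finset.Ico M' N, min ((i:ℝ)+1) M * (a i/((i:ℝ)+1))
        ≤ ∑ i ∈ Finset.Ico M' N, M * (a i/((i:ℝ)+1)) := by
          apply Finset.sum_le_sum
          intro i _
          exact mul_le_mul_of_nonneg_right (min_le_right _ _)
            (div_nonneg (ha i) (by positivity))
      _ = M * ∑ i ∈ Finset.Ico M' N,
            (Real.sqrt ((i:ℝ)+1) * a i) * (1/Real.sqrt (((i:ℝ)+1)^3)) := by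
          rw [Finset.mul_sum]
          exact Finset.sum_congr rfl fun i hi => by rw [key i hi]
      _ ≤ M * (Real.sqrt (∑ i ∈ Finset.Ico M' N, (Real.sqrt ((i:ℝ)+1) * a i)^2)
            * Real.sqrt (∑ i ∈ Finset.Ico M' N, (1/Real.sqrt (((i:ℝ)+1)^3))^2)) := by
          apply mul_le_mul_of_nonneg_left _ (by positivity)
          exact sum_mul_le_sqrt _ _ _
      _ ≤ M * (Real.sqrt (∑ i ∈ Finset.range N, ((i:ℝ)+1) * a i ^2)
            * Real.sqrt (2/M^2)) := by
          apply mul_le_mul_of_nonneg_left _ (by positivity)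
          apply mul_le_mul
          · apply Real.sqrt_le_sqrt
            have e1 : ∑ i ∈ Finset.Ico M' N, (Real.sqrt ((i:ℝ)+1) * a i)^2
                = ∑ i ∈ Finset.Ico M' N, ((i:ℝ)+1) * a i ^2 := by
              apply Finset.sum_congr rfl
              intro i _
              rw [mul_pow, Real.sq_sqrt (by positivity)]
            rw [e1]
            apply Finset.sum_le_sum_of_subset_of_nonneg
            · intro i hi
              simp only [Finset.mem_Ico, Finset.mem_range] at hi ⊢
              exact hi.2
            · intro i _ _; positivity
          · apply Real.sqrt_le_sqrt
            have e2 : ∑ i ∈ Finset.Ico M' N, (1/Real.sqrt (((i:ℝ)+1)^3))^2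
                = ∑ i ∈ Finset.Ico M' N, (1:ℝ)/(((i:ℝ)+1)^3) := by
              apply Finset.sum_congr rfl
              intro i _
              rw [div_pow, one_pow, Real.sq_sqrt (by positivity)]
            rw [e2]
            calc ∑ i ∈ Finset.Ico M' N, (1:ℝ)/(((i:ℝ)+1)^3)
                ≤ ∑ i ∈ Finset.Ico M' N, (2/M) * ((1:ℝ)/((i:ℝ)+1) - 1/((i:ℝ)+2)) := by
                  apply Finset.sum_le_sum
                  intro i hi
                  simp only [Finset.mem_Ico] at hi
                  have hMi : M ≤ (i:ℝ)+1 := by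
                    have : (M':ℝ) ≤ (i:ℝ) := by exact_mod_cast hi.1
                    linarith
                  have h1 : (0:ℝ) < (i:ℝ)+1 := by positivity
                  have h2 : (0:ℝ) < (i:ℝ)+2 := by positivity
                  have htel : (1:ℝ)/((i:ℝ)+1) - 1/((i:ℝ)+2) = 1/(((i:ℝ)+1)*((i:ℝ)+2)) := by
                    field_simp; ring
                  rw [htel, show (2:ℝ)/M * (1/(((i:ℝ)+1)*((i:ℝ)+2)))
                      = 2/(M*(((i:ℝ)+1)*((i:ℝ)+2))) by field_simp,
                    div_le_div_iff₀ (by positivity) (by positivity)]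
                  nlinarith [mul_le_mul_of_nonneg_right hMi (mul_pos h1 h2).le,
                    mul_nonneg (mul_nonneg h1.le h1.le) (Nat.cast_nonneg i)]
                _ = (2/M) * ∑ i ∈ Finset.Ico M' N, ((1:ℝ)/((i:ℝ)+1) - 1/((i:ℝ)+2)) := by
                  rw [Finset.mul_sum]
                _ ≤ (2/M) * (1/((M':ℝ)+1)) :=
                  mul_le_mul_of_nonneg_left (tele M' N) (by positivity)
                _ ≤ (2/M) * (1/M) := by
                  apply mul_le_mul_of_nonneg_left
                    (one_div_le_one_div_of_le hM0 (by linarith)) (by positivity)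
                _ = 2/M^2 := by field_simp
          · positivity
          · positivity
      _ ≤ 2 * Real.sqrt (∑ i ∈ Finset.range N, ((i:ℝ)+1) * a i ^2) := by
          have hsq : Real.sqrt (2/M^2) = Real.sqrt 2 / M := by
            rw [Real.sqrt_div (by norm_num : (0:ℝ) ≤ 2), Real.sqrt_sq hM0.le]
          have h2' : Real.sqrt 2 ≤ 2 := by
            nlinarith [Real.sq_sqrt (by norm_num : (0:ℝ) ≤ 2), Real.sqrt_nonneg 2]
          rw [hsq]
          calc M * (Real.sqrt (∑ i ∈ Finset.range N, ((i:ℝ)+1) * a i ^2) * (Real.sqrt 2/M))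
              = Real.sqrt 2 * Real.sqrt (∑ i ∈ Finset.range N, ((i:ℝ)+1) * a i ^2) := by
                field_simp
            _ ≤ 2 * Real.sqrt (∑ i ∈ Finset.range N, ((i:ℝ)+1) * a i ^2) :=
                mul_le_mul_of_nonneg_right h2' (Real.sqrt_nonneg _)
  linarith


private lemma log_two_le_one : Real.log 2 ≤ 1 := by
  have := Real.log_le_sub_one_of_pos (x := 2) (by norm_num)
  linarith

private lemma pair_bound (α : ℕ → ℂ) (A C : ℝ) (hC : 0 < C) (hA0 : 0 ≤ A)
    (hA : ∀ N : ℕ, 2 ≤ N →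
      ∑ m ∈ Finset.range (N + 1), ((m : ℝ) + 1) * Complex.abs (α m) ^ 2 ≤ A * Real.log N)
    (n : ℕ) (hn : 3 ≤ n) (x : ℝ) (g : ℕ → ℝ)
    (hg : ∀ i, |g (i+1) - g i| ≤ 4*C*Complex.abs (α i))
    (δ : ℝ) (hδ0 : 0 < δ) (hδ1 : δ ≤ 1) (hδ : δ ≤ ‖((x:ℝ) : AddCircle (2*π))‖) :
    Complex.abs (∑ j ∈ Finset.range n,
        Complex.exp (Complex.I * (((j:ℝ)+1) * x + g j)) * (1/((j:ℝ)+1))) ≤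
      π/(δ*n) + (Real.log (π/δ) + 3) + 4*C*Real.sqrt A*(Real.log (π/δ) + 3)
      + 8*C*Real.sqrt (A * Real.log n) := by
  have hπ := Real.pi_pos
  have hM1 : 1 ≤ π/δ := by
    rw [le_div_iff₀ hδ0]
    nlinarith [Real.pi_gt_three]
  have hlogM : 0 ≤ Real.log (π/δ) := Real.log_nonneg hM1
  have hcore := core_abel n (by omega) x g (fun i => 4*C*Complex.abs (α i)) hg δ hδ0 hδ
  refine hcore.trans ?_
  have hsplit : ∑ i ∈ Finset.range (n-1), min ((i:ℝ)+1) (π/δ) *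
        ((4*C*Complex.abs (α i))/((i:ℝ)+1) + 1/(((i:ℝ)+1)*((i:ℝ)+2)))
      = ∑ i ∈ Finset.range (n-1), min ((i:ℝ)+1) (π/δ) * ((4*C*Complex.abs (α i))/((i:ℝ)+1))
        + ∑ i ∈ Finset.range (n-1), min ((i:ℝ)+1) (π/δ) * (1/(((i:ℝ)+1)*((i:ℝ)+2))) := by
    rw [← Finset.sum_add_distrib]
    exact Finset.sum_congr rfl fun i _ => by ring
  rw [hsplit]
  have hT1 := sumT1 (n-1) (π/δ) hM1
  have hT2 := sumT2 (n-1) (π/δ) hM1 (fun i => 4*C*Complex.abs (α i))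
    (fun i => by positivity)
  -- simplify the T2 right-hand side
  set M' := ⌈π/δ⌉₊ with hM'def
  have hMM' : π/δ ≤ M' := Nat.le_ceil _
  have hM'M : (M':ℝ) ≤ π/δ + 1 := le_of_lt (Nat.ceil_lt_add_one (by linarith))
  have hsq : ∀ (s : Finset ℕ), ∑ i ∈ s, ((i:ℝ)+1) * (4*C*Complex.abs (α i))^2
      = (4*C)^2 * ∑ i ∈ s, ((i:ℝ)+1) * Complex.abs (α i)^2 := by
    intro s
    rw [Finset.mul_sum]
    exact Finset.sum_congr rfl fun i _ => by ring
  have hP1 : ∑ i ∈ Finset.range M', ((i:ℝ)+1) * Complex.abs (α i)^2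
      ≤ A * (Real.log (π/δ) + 3) := by
    calc ∑ i ∈ Finset.range M', ((i:ℝ)+1) * Complex.abs (α i)^2
        ≤ ∑ i ∈ Finset.range (M'+2+1), ((i:ℝ)+1) * Complex.abs (α i)^2 := by
          apply Finset.sum_le_sum_of_subset_of_nonneg
          · exact Finset.range_subset_range.2 (by omega)
          · intro i _ _; positivity
      _ ≤ A * Real.log (M'+2 : ℕ) := hA (M'+2) (by omega)
      _ ≤ A * (Real.log (π/δ) + 3) := by
          apply mul_le_mul_of_nonneg_left _ hA0
          have h1 : ((M'+2 : ℕ):ℝ) ≤ 4*(π/δ) := by push_cast; linarith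
          have h2 : Real.log ((M'+2:ℕ):ℝ) ≤ Real.log (4*(π/δ)) :=
            Real.log_le_log (by positivity) h1
          have h3 : Real.log (4*(π/δ)) = Real.log 4 + Real.log (π/δ) :=
            Real.log_mul (by norm_num) (by positivity)
          have h4 : Real.log 4 ≤ 2 := by
            have : Real.log 4 = 2 * Real.log 2 := by
              rw [show (4:ℝ) = 2^2 by norm_num, Real.log_pow]
              push_cast; ring
            nlinarith [log_two_le_one]
          linarith
  have hP2 : ∑ i ∈ Finset.range (n-1), ((i:ℝ)+1) * Complex.abs (α i)^2
      ≤ A * Real.log n := by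
    calc ∑ i ∈ Finset.range (n-1), ((i:ℝ)+1) * Complex.abs (α i)^2
        ≤ ∑ i ∈ Finset.range ((n-1)+1), ((i:ℝ)+1) * Complex.abs (α i)^2 := by
          apply Finset.sum_le_sum_of_subset_of_nonneg
          · exact Finset.range_subset_range.2 (by omega)
          · intro i _ _; positivity
      _ ≤ A * Real.log ((n-1:ℕ):ℝ) := hA (n-1) (by omega)
      _ ≤ A * Real.log n := by
          apply mul_le_mul_of_nonneg_left _ hA0
          apply Real.log_le_log
          · have : (2:ℕ) ≤ n-1 := by omega
            have : ((2:ℕ):ℝ) ≤ ((n-1:ℕ):ℝ) := by exact_mod_cast this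
            push_cast at this ⊢
            linarith
          · exact_mod_cast Nat.sub_le n 1
  have hT2' : ∑ i ∈ Finset.range (n-1), min ((i:ℝ)+1) (π/δ) *
        ((4*C*Complex.abs (α i))/((i:ℝ)+1))
      ≤ 4*C*Real.sqrt A*(Real.log (π/δ) + 3) + 8*C*Real.sqrt (A * Real.log n) := by
    refine hT2.trans ?_
    have e1 : Real.sqrt (∑ i ∈ Finset.range M', ((i:ℝ)+1) * (4*C*Complex.abs (α i))^2)
        ≤ 4*C* (Real.sqrt A * Real.sqrt (Real.log (π/δ) + 3)) := by
      rw [hsq, show ((4:ℝ)*C)^2 * ∑ i ∈ Finset.range M', ((i:ℝ)+1) * Complex.abs (α i)^2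
          = (4*C)^2 * ∑ i ∈ Finset.range M', ((i:ℝ)+1) * Complex.abs (α i)^2 from rfl,
        Real.sqrt_mul (by positivity), Real.sqrt_sq (by positivity)]
      apply mul_le_mul_of_nonneg_left _ (by positivity)
      rw [← Real.sqrt_mul hA0]
      exact Real.sqrt_le_sqrt hP1
    have e2 : Real.sqrt (∑ i ∈ Finset.range (n-1), ((i:ℝ)+1) * (4*C*Complex.abs (α i))^2)
        ≤ 4*C* Real.sqrt (A * Real.log n) := by
      rw [hsq, Real.sqrt_mul (by positivity), Real.sqrt_sq (by positivity)]
      exact mul_le_mul_of_nonneg_left (Real.sqrt_le_sqrt hP2) (by positivity)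
    have e3 : Real.sqrt (Real.log (π/δ) + 2) ≤ Real.sqrt (Real.log (π/δ) + 3) :=
      Real.sqrt_le_sqrt (by linarith)
    calc Real.sqrt (∑ i ∈ Finset.range M', ((i:ℝ)+1) * (4*C*Complex.abs (α i))^2)
          * Real.sqrt (Real.log (π/δ) + 2)
        + 2 * Real.sqrt (∑ i ∈ Finset.range (n-1), ((i:ℝ)+1) * (4*C*Complex.abs (α i))^2)
        ≤ (4*C* (Real.sqrt A * Real.sqrt (Real.log (π/δ) + 3))) * Real.sqrt (Real.log (π/δ) + 3)
          + 2 * (4*C* Real.sqrt (A * Real.log n)) := by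
          apply add_le_add
          · exact mul_le_mul e1 e3 (Real.sqrt_nonneg _) (by positivity)
          · exact mul_le_mul_of_nonneg_left e2 (by norm_num)
      _ = 4*C*Real.sqrt A*(Real.sqrt (Real.log (π/δ) + 3) * Real.sqrt (Real.log (π/δ) + 3))
          + 8*C*Real.sqrt (A * Real.log n) := by ring
      _ = 4*C*Real.sqrt A*(Real.log (π/δ) + 3) + 8*C*Real.sqrt (A * Real.log n) := by
          rw [Real.mul_self_sqrt (by linarith)]
  linarith


set_option maxHeartbeats 4000000 in
/-- Bound on the number of resonant points: under the Coulomb condition, there are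
`n₀` and `K_max` (depending only on `A` and `C`) such that for `n ≥ n₀` there can be at
most `K_max` points `η_1, …, η_K` that are `n^{-1/(3K²)}`-separated on the circle and
satisfy `|∑_{j<n} α_j e^{i[(j+1)η_l + 2θ_j(η_l)]}| ≥ (log n)/14`. -/
theorem stmt14 (α : ℕ → ℂ) (A C : ℝ) (hC : 0 < C)
    (hA : ∀ N : ℕ, 2 ≤ N →
      ∑ n ∈ Finset.range (N + 1), ((n : ℝ) + 1) * ‖α n‖ ^ 2 ≤ A * Real.log N) :
    ∃ n₀ K_max : ℕ, ∀ n : ℕ, n₀ ≤ n → ∀ K : ℕ, ∀ η : Fin K → ℝ, ∀ θ : Fin K → ℕ → ℝ,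
      (∀ l : Fin K, ∀ j : ℕ, 1 ≤ j →
        |θ l j - θ l (j - 1)| ≤ C * ‖α (j - 1)‖) →
      (∀ k l : Fin K, k ≠ l →
        (n : ℝ) ^ (-(1 / (3 * (K : ℝ) ^ 2))) ≤ ‖((η k - η l : ℝ) : AddCircle (2 * π))‖) →
      (∀ l : Fin K,
        Real.log n / 14 ≤ ‖∑ j ∈ Finset.range n,
          α j * Complex.exp (Complex.I * (((j : ℝ) + 1) * η l + 2 * θ l j))‖) →
      K ≤ K_max := by
  have hπ := Real.pi_pos
  have hA0 : 0 ≤ A := by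
    have h := hA 2 le_rfl
    norm_num at h
    have hpos : 0 ≤ ∑ m ∈ Finset.range (2+1), ((m:ℝ)+1)*‖α m‖^2 := by positivity
    have hlog : (0:ℝ) < Real.log 2 := Real.log_pos (by norm_num)
    by_contra hneg
    push_neg at hneg
    have : A * Real.log 2 < 0 := mul_neg_of_neg_of_pos hneg hlog
    norm_num at h hpos
    linarith
  set sA := Real.sqrt A with hsA
  have hsA0 : 0 ≤ sA := Real.sqrt_nonneg A
  clear_value sA
  set c₁ : ℝ := 1 + 4*C*sA with hc₁
  have hc₁0 : (0:ℝ) < c₁ := by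
    have h0 : 0 ≤ 4*C*sA := mul_nonneg (by positivity) hsA0
    rw [hc₁]; linarith
  clear_value c₁
  set T : ℝ := 1 + 1000*A*(4+6*c₁) + (8000*C*A*sA)^2 with hT
  have hTaux1 : 0 ≤ 1000*A*(4+6*c₁) := by
    have h0 := mul_nonneg hA0 (show (0:ℝ) ≤ 4+6*c₁ by linarith only [hc₁0])
    linarith only [h0]
  have hTaux2 : 0 ≤ (8000*C*A*sA)^2 := sq_nonneg _
  clear_value T
  refine ⟨max 3 (⌈Real.exp T⌉₊ + 1), ⌈400*A*(3+4*C*sA)⌉₊ + 1, ?_⟩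
  intro n hn K η θ hθ hsep hres
  have hn3 : 3 ≤ n := le_trans (le_max_left _ _) hn
  have hnR : (3:ℝ) ≤ (n:ℝ) := by exact_mod_cast hn3
  set L := Real.log n with hLdef
  have hLT : T ≤ L := by
    have h1 : Real.exp T ≤ (n:ℝ) := by
      have h2 : (⌈Real.exp T⌉₊ + 1 : ℕ) ≤ n := le_trans (le_max_right _ _) hn
      calc Real.exp T ≤ (⌈Real.exp T⌉₊ : ℝ) := Nat.le_ceil _
        _ ≤ (n:ℝ) := by exact_mod_cast (by omega : ⌈Real.exp T⌉₊ ≤ n)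
    calc T = Real.log (Real.exp T) := (Real.log_exp T).symm
      _ ≤ L := Real.log_le_log (Real.exp_pos T) h1
  have hL1 : (1:ℝ) ≤ L := by
    have : (1:ℝ) ≤ T := by rw [hT]; linarith
    linarith
  rcases Nat.eq_zero_or_pos K with hK0 | hK1
  · subst hK0; omega
  have hKR : (1:ℝ) ≤ (K:ℝ) := by exact_mod_cast hK1
  -- notation
  set ee : Fin K → ℕ → ℂ :=
    fun l j => Complex.exp (Complex.I * (((j : ℝ) + 1) * η l + 2 * θ l j)) with hee
  set S : Fin K → ℂ := fun l => ∑ j ∈ Finset.range n, α j * ee l j with hSdef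
  have hee' : ∀ (l : Fin K) (j : ℕ),
      ee l j = Complex.exp (Complex.I * (((j : ℝ) + 1) * η l + 2 * θ l j)) := fun _ _ => rfl
  have hSdef' : ∀ l, S l = ∑ j ∈ Finset.range n, α j * ee l j := fun _ => rfl
  have hres' : ∀ l, L/14 ≤ Complex.abs (S l) := fun l => hres l
  clear_value ee S
  have hSpos : ∀ l, 0 < Complex.abs (S l) := by
    intro l
    have : (0:ℝ) < L/14 := by linarith
    linarith [hres' l]
  have hSne : ∀ l, S l ≠ 0 := by
    intro l h
    have := hSpos l
    rw [h] at this
    simp at this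
  set u : Fin K → ℂ := fun l => (Complex.abs (S l) : ℂ) / S l with hu
  have hu' : ∀ l, u l = (Complex.abs (S l) : ℂ) / S l := fun _ => rfl
  clear_value u
  have huabs : ∀ l, Complex.abs (u l) = 1 := by
    intro l
    rw [hu' l, map_div₀, Complex.abs_ofReal, abs_of_nonneg (Complex.abs.nonneg _)]
    exact div_self (ne_of_gt (hSpos l))
  set B : ℕ → ℂ := fun j => ∑ l, u l * ee l j with hB
  have hB' : ∀ j, B j = ∑ l, u l * ee l j := fun _ => rfl
  clear_value B
  have habs_e : ∀ (l : Fin K) (j : ℕ), Complex.abs (ee l j) = 1 := by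
    intro l j
    rw [hee' l j]
    rw [show (Complex.I * ((((j:ℝ):ℂ)+1) * (η l : ℂ) + 2 * (θ l j : ℂ)))
      = Complex.I * (((((j:ℝ)+1) * η l + 2 * θ l j : ℝ)):ℂ) by push_cast; ring]
    exact abs_exp_I_mul _
  -- Step 1 : K L/14 ≤ ∑ |S l| = |∑ α_j B_j|
  have hsum_lower : (K:ℝ) * (L/14) ≤ ∑ l, Complex.abs (S l) := by
    calc (K:ℝ)*(L/14) = ∑ _l : Fin K, (L/14) := by
          rw [Finset.sum_const, Finset.card_univ, Fintype.card_fin, nsmul_eq_mul]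
      _ ≤ ∑ l, Complex.abs (S l) := Finset.sum_le_sum fun l _ => hres' l
  have hswap : ∑ l, u l * S l = ∑ j ∈ Finset.range n, α j * B j := by
    calc ∑ l, u l * S l = ∑ l, ∑ j ∈ Finset.range n, u l * (α j * ee l j) := by
          apply Finset.sum_congr rfl
          intro l _
          rw [hSdef' l, Finset.mul_sum]
      _ = ∑ j ∈ Finset.range n, ∑ l, u l * (α j * ee l j) := Finset.sum_comm
      _ = ∑ j ∈ Finset.range n, α j * B j := by
          apply Finset.sum_congr rfl
          intro j _
          rw [hB' j, Finset.mul_sum]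
          exact Finset.sum_congr rfl fun l _ => by ring
  have habs_sum : ∑ l, Complex.abs (S l)
      = Complex.abs (∑ j ∈ Finset.range n, α j * B j) := by
    rw [← hswap]
    have h1 : ∑ l, u l * S l = (((∑ l, Complex.abs (S l) : ℝ)) : ℂ) := by
      push_cast
      apply Finset.sum_congr rfl
      intro l _
      rw [hu' l]
      exact div_mul_cancel₀ _ (hSne l)
    rw [h1, Complex.abs_ofReal, abs_of_nonneg (by positivity)]
  -- Step 2 : Cauchy-Schwarz
  set W : ℝ := ∑ j ∈ Finset.range n, Complex.abs (B j)^2 * (1/((j:ℝ)+1)) with hW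
  clear_value W
  have hW0 : 0 ≤ W := by rw [hW]; positivity
  set Sw : ℝ := ∑ j ∈ Finset.range n, ((j:ℝ)+1) * Complex.abs (α j)^2 with hSw
  clear_value Sw
  have hCS : Complex.abs (∑ j ∈ Finset.range n, α j * B j)
      ≤ Real.sqrt Sw * Real.sqrt W := by
    calc Complex.abs (∑ j ∈ Finset.range n, α j * B j)
        ≤ ∑ j ∈ Finset.range n, Complex.abs (α j * B j) := Complex.abs.sum_le _ _
      _ = ∑ j ∈ Finset.range n, (Real.sqrt ((j:ℝ)+1) * Complex.abs (α j))
            * (Complex.abs (B j) * (1/Real.sqrt ((j:ℝ)+1))) := by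
          apply Finset.sum_congr rfl
          intro j _
          have hs : Real.sqrt ((j:ℝ)+1) ≠ 0 := by positivity
          rw [map_mul]
          field_simp
      _ ≤ Real.sqrt (∑ j ∈ Finset.range n, (Real.sqrt ((j:ℝ)+1) * Complex.abs (α j))^2)
          * Real.sqrt (∑ j ∈ Finset.range n, (Complex.abs (B j) * (1/Real.sqrt ((j:ℝ)+1)))^2) :=
          sum_mul_le_sqrt _ _ _
      _ = Real.sqrt Sw * Real.sqrt W := by
          rw [hW, hSw]
          congr 1
          · congr 1
            apply Finset.sum_congr rfl
            intro j _
            rw [mul_pow, Real.sq_sqrt (by positivity)]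
          · congr 1
            apply Finset.sum_congr rfl
            intro j _
            rw [mul_pow, div_pow, one_pow, Real.sq_sqrt (by positivity)]
  have hSα : Sw ≤ A * L := by
    rw [hSw]
    have h := hA (n-1) (by omega)
    rw [Nat.sub_add_cancel (by omega : 1 ≤ n)] at h
    refine le_trans h ?_
    apply mul_le_mul_of_nonneg_left _ hA0
    apply Real.log_le_log
    · have h2 : (2:ℕ) ≤ n-1 := by omega
      have h2' : (2:ℝ) ≤ ((n-1:ℕ):ℝ) := by exact_mod_cast h2
      linarith
    · exact_mod_cast Nat.sub_le n 1
  -- Step 3 : the resonance matrix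
  set δ : ℝ := (n:ℝ) ^ (-(1 / (3 * (K : ℝ) ^ 2))) with hδdef
  have hnpos : (0:ℝ) < (n:ℝ) := by linarith
  have hδ0 : 0 < δ := by rw [hδdef]; positivity
  have hδ1 : δ ≤ 1 := by
    rw [hδdef]
    apply Real.rpow_le_one_of_one_le_of_nonpos (by linarith : (1:ℝ) ≤ (n:ℝ))
    have h1 : (0:ℝ) < 1/(3*(K:ℝ)^2) := by positivity
    linarith
  have hlogδeq : Real.log δ = -(1/(3*(K:ℝ)^2)) * L := by
    rw [hδdef, Real.log_rpow hnpos, hLdef]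
  have hδn : 1 ≤ δ * (n:ℝ) := by
    have h1 : (n:ℝ)^(-(1:ℝ)) ≤ δ := by
      rw [hδdef]
      apply Real.rpow_le_rpow_of_exponent_le (by linarith : (1:ℝ) ≤ (n:ℝ))
      have h2 : 1/(3*(K:ℝ)^2) ≤ 1 := by
        rw [div_le_one (by positivity)]
        nlinarith only [hKR, sq_nonneg ((K:ℝ)-1)]
      linarith
    calc (1:ℝ) = (n:ℝ)^(-(1:ℝ)) * (n:ℝ) := by
          rw [Real.rpow_neg_one]
          field_simp
      _ ≤ δ * (n:ℝ) := mul_le_mul_of_nonneg_right h1 (by linarith)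
  have hδsep : ∀ k l : Fin K, k ≠ l → δ ≤ ‖((η k - η l : ℝ) : AddCircle (2*π))‖ := by
    intro k l hkl
    rw [hδdef]
    exact hsep k l hkl
  clear_value δ
  set Λ : ℝ := Real.log (π/δ) + 3 with hΛ
  clear_value Λ
  set Gb : ℝ := π/(δ*(n:ℝ)) + Λ + 4*C*sA*Λ + 8*C*Real.sqrt (A*L) with hGb
  clear_value Gb
  have hΛ0 : 0 ≤ Λ := by
    rw [hΛ]
    have h1 : 0 ≤ Real.log (π/δ) := by
      apply Real.log_nonneg
      rw [le_div_iff₀ hδ0]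
      nlinarith only [Real.pi_gt_three, hδ1]
    linarith
  have hGb0 : 0 ≤ Gb := by
    rw [hGb]
    have h1 : 0 ≤ π/(δ*(n:ℝ)) := by positivity
    have h2 : 0 ≤ 4*C*sA*Λ := by positivity
    have h3 : 0 ≤ 8*C*Real.sqrt (A*L) := by positivity
    linarith
  set Gmat : Fin K → Fin K → ℂ := fun k l =>
    ∑ j ∈ Finset.range n, (ee k j * (starRingEnd ℂ) (ee l j)) * (1/((j:ℝ)+1)) with hGmat
  have hGmat' : ∀ k l, Gmat k l
      = ∑ j ∈ Finset.range n, (ee k j * (starRingEnd ℂ) (ee l j)) * (1/((j:ℝ)+1)) :=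
    fun _ _ => rfl
  clear_value Gmat
  have hBB : ∀ j : ℕ, ((Complex.abs (B j) : ℂ))^2 * (1/(((j:ℝ):ℂ)+1))
      = ∑ k, ∑ l, (u k * (starRingEnd ℂ) (u l))
          * ((ee k j * (starRingEnd ℂ) (ee l j)) * (1/((j:ℝ)+1))) := by
    intro j
    have h1 : ((Complex.abs (B j) : ℂ))^2 = B j * (starRingEnd ℂ) (B j) := by
      rw [← Complex.ofReal_pow, Complex.sq_abs, ← Complex.mul_conj]
    rw [h1, hB' j, map_sum, Finset.sum_mul_sum, Finset.sum_mul]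
    apply Finset.sum_congr rfl
    intro k _
    rw [Finset.sum_mul]
    apply Finset.sum_congr rfl
    intro l _
    rw [map_mul]
    ring
  have hW_expand : ((W : ℝ) : ℂ)
      = ∑ k, ∑ l, (u k * (starRingEnd ℂ) (u l)) * Gmat k l := by
    rw [hW]
    push_cast
    calc ∑ j ∈ Finset.range n, ((Complex.abs (B j) : ℂ))^2 * (1/(((j:ℝ):ℂ)+1))
        = ∑ j ∈ Finset.range n, ∑ k, ∑ l, (u k * (starRingEnd ℂ) (u l))
            * ((ee k j * (starRingEnd ℂ) (ee l j)) * (1/((j:ℝ)+1))) :=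
          Finset.sum_congr rfl fun j _ => hBB j
      _ = ∑ k, ∑ j ∈ Finset.range n, ∑ l, (u k * (starRingEnd ℂ) (u l))
            * ((ee k j * (starRingEnd ℂ) (ee l j)) * (1/((j:ℝ)+1))) := Finset.sum_comm
      _ = ∑ k, ∑ l, ∑ j ∈ Finset.range n, (u k * (starRingEnd ℂ) (u l))
            * ((ee k j * (starRingEnd ℂ) (ee l j)) * (1/((j:ℝ)+1))) :=
          Finset.sum_congr rfl fun k _ => Finset.sum_comm
      _ = ∑ k, ∑ l, (u k * (starRingEnd ℂ) (u l)) * Gmat k l := by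
          apply Finset.sum_congr rfl
          intro k _
          apply Finset.sum_congr rfl
          intro l _
          rw [hGmat' k l, Finset.mul_sum]
  have hGdiag : ∀ k l : Fin K, Complex.abs (Gmat k l) ≤ L + 1 := by
    intro k l
    rw [hGmat' k l]
    calc Complex.abs (∑ j ∈ Finset.range n, (ee k j * (starRingEnd ℂ) (ee l j)) * (1/((j:ℝ)+1)))
        ≤ ∑ j ∈ Finset.range n,
            Complex.abs ((ee k j * (starRingEnd ℂ) (ee l j)) * (1/((j:ℝ)+1))) :=
          Complex.abs.sum_le _ _
      _ = ∑ j ∈ Finset.range n, (1:ℝ)/((j:ℝ)+1) := by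
          apply Finset.sum_congr rfl
          intro j _
          rw [map_mul, map_mul, Complex.abs_conj, habs_e, habs_e, one_mul, one_mul]
          rw [show ((1:ℂ)/(((j:ℝ):ℂ)+1)) = (((1/((j:ℝ)+1) : ℝ)):ℂ) by push_cast; ring]
          rw [Complex.abs_ofReal, abs_of_nonneg (by positivity)]
      _ ≤ L + 1 := by rw [hLdef]; exact harm_le n
  have hGoff : ∀ k l : Fin K, k ≠ l → Complex.abs (Gmat k l) ≤ Gb := by
    intro k l hkl
    have heq : Gmat k l = ∑ j ∈ Finset.range n,
        Complex.exp (Complex.I * ((((j:ℝ):ℂ)+1) * (((η k - η l : ℝ)):ℂ)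
            + (((2*θ k j - 2*θ l j : ℝ)):ℂ)))
          * (1/((j:ℝ)+1)) := by
      rw [hGmat' k l]
      apply Finset.sum_congr rfl
      intro j _
      congr 1
      rw [hee' k j, hee' l j, ← Complex.exp_conj, ← Complex.exp_add]
      congr 1
      simp only [map_add, map_mul, Complex.conj_I, Complex.conj_ofReal, map_one, map_ofNat]
      push_cast
      ring
    have hg : ∀ i : ℕ, |(2*θ k (i+1) - 2*θ l (i+1)) - (2*θ k i - 2*θ l i)|
        ≤ 4*C*Complex.abs (α i) := by
      intro i
      have h1 := hθ k (i+1) (by omega)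
      have h2 := hθ l (i+1) (by omega)
      simp only [Nat.add_sub_cancel] at h1 h2
      have e1 : (2*θ k (i+1) - 2*θ l (i+1)) - (2*θ k i - 2*θ l i)
          = 2*(θ k (i+1) - θ k i) - 2*(θ l (i+1) - θ l i) := by ring
      rw [e1]
      calc |2*(θ k (i+1) - θ k i) - 2*(θ l (i+1) - θ l i)|
          ≤ |2*(θ k (i+1) - θ k i)| + |2*(θ l (i+1) - θ l i)| := abs_sub _ _
        _ = 2*|θ k (i+1) - θ k i| + 2*|θ l (i+1) - θ l i| := by
            rw [abs_mul, abs_mul, abs_two]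
        _ ≤ 4*C*‖α i‖ := by linarith
    have hpb := pair_bound α A C hC hA0 hA n hn3 (η k - η l)
      (fun j => 2*θ k j - 2*θ l j) hg δ hδ0 hδ1 (hδsep k l hkl)
    rw [heq, hGb, hΛ, hLdef, hsA]
    exact hpb
  have hW_le : W ≤ (K:ℝ)*(L+1) + (K:ℝ)^2 * Gb := by
    have hWr : W = Complex.abs (((W:ℝ)):ℂ) := by
      rw [Complex.abs_ofReal, abs_of_nonneg hW0]
    rw [hWr, hW_expand]
    calc Complex.abs (∑ k, ∑ l, (u k * (starRingEnd ℂ) (u l)) * Gmat k l)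
        ≤ ∑ k, ∑ l, Complex.abs ((u k * (starRingEnd ℂ) (u l)) * Gmat k l) :=
          (Complex.abs.sum_le _ _).trans
            (Finset.sum_le_sum fun k _ => Complex.abs.sum_le _ _)
      _ = ∑ k : Fin K, ∑ l : Fin K, Complex.abs (Gmat k l) := by
          apply Finset.sum_congr rfl
          intro k _
          apply Finset.sum_congr rfl
          intro l _
          rw [map_mul, map_mul, huabs, Complex.abs_conj, huabs, one_mul, one_mul]
      _ ≤ ∑ k : Fin K, ∑ l : Fin K, ((if k = l then (L+1) else 0) + Gb) := by
          apply Finset.sum_le_sum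
          intro k _
          apply Finset.sum_le_sum
          intro l _
          by_cases hkl' : k = l
          · simp only [hkl', if_true]
            linarith [hGdiag k l, hGb0, hGdiag l l]
          · simp only [hkl', if_false, zero_add]
            exact hGoff k l hkl'
      _ = (K:ℝ)*(L+1) + (K:ℝ)^2 * Gb := by
          have e : ∀ k : Fin K, ∑ l : Fin K, ((if k = l then (L+1) else 0) + Gb)
              = (L+1) + (K:ℝ)*Gb := by
            intro k
            rw [Finset.sum_add_distrib, Finset.sum_const, Finset.card_univ,
              Fintype.card_fin, nsmul_eq_mul, Finset.sum_ite_eq, if_pos (Finset.mem_univ k)]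
          rw [Finset.sum_congr rfl (fun k _ => e k), Finset.sum_const, Finset.card_univ,
            Fintype.card_fin, nsmul_eq_mul]
          ring
  -- Step 4 : combine everything
  have hfin1 : ((K:ℝ) * (L/14))^2 ≤ (A*L) * W := by
    have h5 : (K:ℝ)*(L/14) ≤ Real.sqrt (A*L) * Real.sqrt W := by
      calc (K:ℝ)*(L/14) ≤ ∑ l, Complex.abs (S l) := hsum_lower
        _ = Complex.abs (∑ j ∈ Finset.range n, α j * B j) := habs_sum
        _ ≤ Real.sqrt Sw * Real.sqrt W := hCS
        _ ≤ Real.sqrt (A*L) * Real.sqrt W :=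
          mul_le_mul_of_nonneg_right (Real.sqrt_le_sqrt hSα) (Real.sqrt_nonneg _)
    have h6 := pow_le_pow_left₀ (by positivity) h5 2
    calc ((K:ℝ)*(L/14))^2 ≤ (Real.sqrt (A*L) * Real.sqrt W)^2 := h6
      _ = (A*L) * W := by
        rw [mul_pow, Real.sq_sqrt (by positivity), Real.sq_sqrt hW0]
  have hπ4 : π ≤ 4 := by linarith only [Real.pi_lt_d2]
  have hlogpi : Real.log π ≤ 3 := by
    have := Real.log_le_sub_one_of_pos hπ
    linarith only [this, Real.pi_lt_d2]
  have hΛB : Λ ≤ L/(3*(K:ℝ)^2) + 6 := by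
    rw [hΛ, Real.log_div (ne_of_gt hπ) (ne_of_gt hδ0), hlogδeq]
    have e1 : -(-(1/(3*(K:ℝ)^2)) * L) = L/(3*(K:ℝ)^2) := by ring
    linarith only [hlogpi, e1.le, e1.ge]
  have hGbB : Gb ≤ 4 + c₁*(L/(3*(K:ℝ)^2) + 6) + 8*C*(sA*Real.sqrt L) := by
    rw [hGb]
    have h1 : π/(δ*(n:ℝ)) ≤ 4 := le_trans (div_le_self hπ.le hδn) hπ4
    have h2 : Real.sqrt (A*L) = sA*Real.sqrt L := by
      rw [Real.sqrt_mul hA0, ← hsA]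
    have h4 : Λ + 4*C*sA*Λ ≤ c₁*(L/(3*(K:ℝ)^2) + 6) := by
      have h5 : (1+4*C*sA)*Λ ≤ (1+4*C*sA)*(L/(3*(K:ℝ)^2) + 6) :=
        mul_le_mul_of_nonneg_left hΛB (by positivity)
      rw [hc₁]
      nlinarith only [h5]
    rw [h2]
    linarith only [h1, h4]
  have hLT' : 1 + 1000*A*(4+6*c₁) + (8000*C*A*sA)^2 ≤ L := by rw [← hT]; exact hLT
  have hcond1 : A*(4+6*c₁) ≤ L/1000 := by nlinarith only [hLT', hTaux2]
  have hL0 : (0:ℝ) ≤ L := by linarith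
  have hcond2 : 8*C*A*sA*Real.sqrt L ≤ L/1000 := by
    have ha : (8000*C*A*sA)^2 ≤ L := by linarith
    have hb : 8000*C*A*sA ≤ Real.sqrt L := by
      calc 8000*C*A*sA = Real.sqrt ((8000*C*A*sA)^2) := (Real.sqrt_sq (by positivity)).symm
        _ ≤ Real.sqrt L := Real.sqrt_le_sqrt ha
    have hc' := mul_le_mul_of_nonneg_right hb (Real.sqrt_nonneg L)
    rw [Real.mul_self_sqrt hL0] at hc'
    linarith only [hc']
  have hstep : (A*L) * W ≤ (2*A + A*c₁)*(K:ℝ)*L^2 + (K:ℝ)^2*L^2*(2/1000) := by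
    have h7 : W ≤ (K:ℝ)*(L+1) + (K:ℝ)^2 * (4 + c₁*(L/(3*(K:ℝ)^2) + 6) + 8*C*(sA*Real.sqrt L)) :=
      hW_le.trans (add_le_add_right (mul_le_mul_of_nonneg_left hGbB (by positivity)) _)
    have h8 : (K:ℝ)^2 * (4 + c₁*(L/(3*(K:ℝ)^2) + 6) + 8*C*(sA*Real.sqrt L))
        = (4+6*c₁)*(K:ℝ)^2 + c₁*L/3 + 8*C*sA*Real.sqrt L*(K:ℝ)^2 := by
      field_simp
      ring
    have h9 : W ≤ (K:ℝ)*(L+1) + ((4+6*c₁)*(K:ℝ)^2 + c₁*L/3 + 8*C*sA*Real.sqrt L*(K:ℝ)^2) := by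
      rw [h8] at h7
      linarith only [h7]
    have hALpos : (0:ℝ) ≤ A*L := by positivity
    have h10 := mul_le_mul_of_nonneg_left h9 hALpos
    have hdist : A*L*((K:ℝ)*(L+1) + ((4+6*c₁)*(K:ℝ)^2 + c₁*L/3 + 8*C*sA*Real.sqrt L*(K:ℝ)^2))
        = A*L*((K:ℝ)*(L+1)) + A*L*((4+6*c₁)*(K:ℝ)^2) + A*L*(c₁*L/3)
          + A*L*(8*C*sA*Real.sqrt L*(K:ℝ)^2) := by ring
    rw [hdist] at h10
    have hK0' : (0:ℝ) ≤ (K:ℝ) := by linarith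
    have p1 : A*L*((K:ℝ)*(L+1)) ≤ 2*A*(K:ℝ)*L^2 := by
      nlinarith only [mul_nonneg (mul_nonneg (mul_nonneg hA0 hL0) hK0') (sub_nonneg.2 hL1)]
    have p2 : A*L*(c₁*L/3) ≤ A*c₁*(K:ℝ)*L^2 := by
      nlinarith only [mul_nonneg (mul_nonneg (mul_nonneg hA0 hc₁0.le) (sq_nonneg L))
        (sub_nonneg.2 hKR), mul_nonneg (mul_nonneg hA0 hc₁0.le) (sq_nonneg L)]
    have p3 : A*L*((4+6*c₁)*(K:ℝ)^2) ≤ (K:ℝ)^2*L^2*(1/1000) := by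
      have hmm := mul_le_mul_of_nonneg_right hcond1 (by positivity : (0:ℝ) ≤ L*(K:ℝ)^2)
      nlinarith only [hmm]
    have p4 : A*L*(8*C*sA*Real.sqrt L*(K:ℝ)^2) ≤ (K:ℝ)^2*L^2*(1/1000) := by
      have hmm := mul_le_mul_of_nonneg_right hcond2 (by positivity : (0:ℝ) ≤ L*(K:ℝ)^2)
      nlinarith only [hmm]
    linarith only [h10, p1, p2, p3, p4]
  have hfinal : (K:ℝ) ≤ 400*A*(3+4*C*sA) := by
    have h := hfin1.trans hstep
    have hKL2 : (0:ℝ) < (K:ℝ)*L^2 := by positivity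
    have h' : (K:ℝ)*(1/196 - 2/1000) * ((K:ℝ)*L^2) ≤ (2*A + A*c₁) * ((K:ℝ)*L^2) := by
      nlinarith only [h]
    have h'' := le_of_mul_le_mul_right h' hKL2
    rw [hc₁] at h''
    have haux : (0:ℝ) ≤ A*C*sA := by positivity
    nlinarith only [h'', hA0, haux]
  have hceil := Nat.le_ceil (400*A*(3+4*C*sA))
  have hfinal2 : (K:ℝ) ≤ ((⌈400*A*(3+4*C*sA)⌉₊ + 1 : ℕ):ℝ) := by
    push_cast
    linarith
  exact_mod_cast hfinal2
end
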